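/- arXiv:math/0103131 — 7 statements merged into one kernel-verified Lean document; each statement's English description precedes it below -/
import Mathlib

section
/- Let Δ_1, …, Δ_r be intervals of the real line whose interiors are pairwise disjoint, and for each j let w_j be a nonnegative integrable weight function on Δ_j that is positive on a set of positive measure, with all moments ∫_{Δ_j} |x|^k w_j(x) dx finite. Let n_1, …, n_r be nonnegative integers and let P be a monic real polynomial of degree |n| = n_1 + ⋯ + n_r such that ∫_{Δ_j} P(x) x^k w_j(x) dx = 0 for all k = 0, 1, …, n_j − 1 and all j = 1, …, r. Then P factors as a product of r polynomials q_{n_1} ⋯ q_{n_r}, where each q_{n_j} is monic of degree n_j and has exactly n_j zeros, all lying in Δ_j; equivalently, P has exactly n_j simple zeros in each interval Δ_j. -/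
/-!
On each `Δⱼ` let `Tⱼ` be the set of interior points where `P` changes sign, i.e. its
roots there of odd multiplicity. If `#Tⱼ < nⱼ`, then `P · ∏_{t ∈ Tⱼ} (x - t)` has constant
sign on `Δⱼ`, yet it is orthogonal to `wⱼ` because `∏_{t ∈ Tⱼ} (x - t)` has degree `< nⱼ`; since
`wⱼ > 0` on a set of positive measure this is impossible. Hence `#Tⱼ ≥ nⱼ`. The `Tⱼ` are
disjoint, so `P` has at least `∑ nⱼ = deg P` distinct roots, which forces all the inequalities
to be equalities and `P = ∏ⱼ ∏_{t ∈ Tⱼ} (x - t)`.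
-/

open MeasureTheory Polynomial

namespace Polynomial

section Algebra

variable {R : Type*} [CommRing R] [IsDomain R]

lemma rootMultiplicity_prod_X_sub_C [DecidableEq R] (s : Finset R) (x : R) :
    (∏ a ∈ s, (X - C a)).rootMultiplicity x = if x ∈ s then 1 else 0 := by
  rw [← count_roots, roots_prod_X_sub_C, Multiset.count_eq_of_nodup s.nodup]
  rfl

lemma Monic.eq_prod_X_sub_C_of_natDegree_le_card {P : R[X]} (hP : P.Monic) {s : Finset R}
    (hs : s.val ⊆ P.roots) (hdeg : P.natDegree ≤ s.card) : P = ∏ x ∈ s, (X - C x) := by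
  have hroots : P.roots = s.val :=
    (Multiset.eq_of_le_of_card_le (Finset.val_le_iff_val_subset.2 hs)
      (P.card_roots'.trans hdeg)).symm
  have hcard : Multiset.card P.roots = P.natDegree :=
    le_antisymm P.card_roots' (hroots ▸ hdeg)
  conv_lhs => rw [← prod_multiset_X_sub_C_of_monic_of_roots_card_eq hP hcard, hroots]
  rfl

lemma Monic.eq_prod_prod_X_sub_C {ι : Type*} [Fintype ι] {P : R[X]} (hP : P.Monic)
    (T : ι → Finset R) (hT : ∀ j, (T j).val ⊆ P.roots)
    (hdisj : Pairwise fun i j => Disjoint (T i) (T j))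
    (n : ι → ℕ) (hn : ∀ j, n j ≤ (T j).card) (hdeg : P.natDegree = ∑ j, n j) :
    (∀ j, (T j).card = n j) ∧ P = ∏ j, ∏ x ∈ T j, (X - C x) := by
  classical
  set U := Finset.univ.biUnion T
  have hU : U.val ⊆ P.roots := fun x hx => by
    obtain ⟨j, -, hxj⟩ := Finset.mem_biUnion.1 hx
    exact hT j hxj
  have hdisjU : ((Finset.univ : Finset ι) : Set ι).PairwiseDisjoint T :=
    fun i _ j _ hij => hdisj hij
  have hcardU : U.card = ∑ j, (T j).card := Finset.card_biUnion hdisjU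
  have hUle : U.card ≤ P.natDegree := card_le_degree_of_subset_roots hU
  have hsum : ∑ j, n j = ∑ j, (T j).card :=
    le_antisymm (Finset.sum_le_sum fun j _ => hn j) (by omega)
  refine ⟨fun j => ((Finset.sum_eq_sum_iff_of_le fun j _ => hn j).1 hsum j
    (Finset.mem_univ j)).symm, ?_⟩
  rw [hP.eq_prod_X_sub_C_of_natDegree_le_card hU (by omega)]
  exact Finset.prod_biUnion hdisjU

open Classical in
/-- The sign changes of `P` in `s`. -/
noncomputable def oddRootsIn (P : R[X]) (s : Set R) : Finset R :=
  P.roots.toFinset.filter fun x => x ∈ s ∧ Odd (P.rootMultiplicity x)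

@[simp]
lemma mem_oddRootsIn {P : R[X]} {s : Set R} {x : R} :
    x ∈ P.oddRootsIn s ↔ x ∈ P.roots ∧ x ∈ s ∧ Odd (P.rootMultiplicity x) := by
  simp [oddRootsIn]

lemma even_rootMultiplicity_mul_prod_oddRootsIn {P : R[X]} (hP : P ≠ 0) {s : Set R} {x : R}
    (hx : x ∈ s) : Even ((P * ∏ a ∈ P.oddRootsIn s, (X - C a)).rootMultiplicity x) := by
  classical
  rw [rootMultiplicity_mul (mul_ne_zero hP (monic_prod_X_sub_C _ _).ne_zero),
    rootMultiplicity_prod_X_sub_C]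
  split_ifs with h
  · exact (mem_oddRootsIn.1 h).2.2.add_one
  · rw [add_zero, ← Nat.not_odd_iff_even]
    intro hodd
    refine h (mem_oddRootsIn.2 ⟨?_, hx, hodd⟩)
    rw [← Multiset.count_pos, count_roots]
    exact hodd.pos

end Algebra

lemma eval_mul_eval_nonneg_of_even_rootMultiplicity {I : Set ℝ} (hI : I.OrdConnected)
    {f : ℝ[X]} (hf : f ≠ 0) (heven : ∀ x ∈ I, Even (f.rootMultiplicity x))
    {a b : ℝ} (ha : a ∈ I) (hb : b ∈ I) : 0 ≤ f.eval a * f.eval b := by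
  induction hd : f.natDegree using Nat.strong_induction_on generalizing f with
  | _ d ih =>
  by_contra! hneg
  obtain ⟨z, hzI, hz⟩ : ∃ z ∈ I, f.IsRoot z := by
    have h0 : (0 : ℝ) ∈ Set.uIcc (f.eval a) (f.eval b) := by
      rcases mul_neg_iff.1 hneg with h | h
      · exact Set.mem_uIcc.2 (Or.inr ⟨h.2.le, h.1.le⟩)
      · exact Set.mem_uIcc.2 (Or.inl ⟨h.1.le, h.2.le⟩)
    obtain ⟨z, hz, hz0⟩ := intermediate_value_uIcc f.continuous.continuousOn h0
    exact ⟨z, hI.uIcc_subset ha hb hz, hz0⟩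
  set m := f.rootMultiplicity z
  obtain ⟨g, hfg⟩ : (X - C z) ^ m ∣ f := pow_rootMultiplicity_dvd f z
  have hg : g ≠ 0 := by rintro rfl; exact hf (by rw [hfg, mul_zero])
  have hpow : ((X - C z) ^ m : ℝ[X]) ≠ 0 := ((monic_X_sub_C z).pow m).ne_zero
  have hm : 0 < m := (rootMultiplicity_pos hf).2 hz
  have hgdeg : g.natDegree < d := by
    have : f.natDegree = m + g.natDegree := by
      rw [hfg, natDegree_mul hpow hg, natDegree_pow, natDegree_X_sub_C, mul_one]
    omega
  have hgeven : ∀ x ∈ I, Even (g.rootMultiplicity x) := by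
    intro x hx
    have hpow_even : Even (((X - C z) ^ m).rootMultiplicity x) := by
      by_cases hxz : x = z
      · rw [hxz, rootMultiplicity_X_sub_C_pow]
        exact heven z hzI
      · rw [rootMultiplicity_eq_zero (by simp [sub_ne_zero.2 hxz])]
        exact Even.zero
    have hfx := heven x hx
    rw [hfg, rootMultiplicity_mul (hfg ▸ hf)] at hfx
    exact (Nat.even_add.1 hfx).1 hpow_even
  have hfactor : f.eval a * f.eval b = ((a - z) * (b - z)) ^ m * (g.eval a * g.eval b) := by
    rw [hfg]; simp only [eval_mul, eval_pow, eval_sub, eval_X, eval_C, mul_pow]; ring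
  have := mul_nonneg ((heven z hzI).pow_nonneg ((a - z) * (b - z)))
    (ih _ hgdeg hg hgeven rfl)
  linarith

lemma eval_nonneg_or_eval_nonpos_of_even_rootMultiplicity {I : Set ℝ} (hI : I.OrdConnected)
    {f : ℝ[X]} (hf : f ≠ 0) (heven : ∀ x ∈ I, Even (f.rootMultiplicity x)) :
    (∀ x ∈ I, 0 ≤ f.eval x) ∨ ∀ x ∈ I, f.eval x ≤ 0 := by
  by_cases h : ∃ a ∈ I, 0 < f.eval a
  · obtain ⟨a, ha, hfa⟩ := h
    exact Or.inl fun x hx => nonneg_of_mul_nonneg_right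
      (eval_mul_eval_nonneg_of_even_rootMultiplicity hI hf heven ha hx) hfa
  · push Not at h
    exact Or.inr h

end Polynomial

section Integral

lemma setIntegral_mul_pos {α : Type*} [MeasurableSpace α] {μ : Measure α} {s : Set α}
    (hs : MeasurableSet s) {f w : α → ℝ} (hf : ∀ᵐ x ∂μ.restrict s, 0 ≤ f x)
    (hf0 : μ {x | f x = 0} = 0) (hw : ∀ x ∈ s, 0 ≤ w x)
    (hfw : IntegrableOn (fun x => f x * w x) s μ) (hpos : 0 < μ {x | x ∈ s ∧ 0 < w x}) :
    0 < ∫ x in s, f x * w x ∂μ := by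
  have hnonneg : 0 ≤ᵐ[μ.restrict s] fun x => f x * w x := by
    filter_upwards [hf, ae_restrict_mem hs] with x hfx hx using mul_nonneg hfx (hw x hx)
  rw [setIntegral_pos_iff_support_of_nonneg_ae hnonneg hfw]
  calc 0 < μ {x | x ∈ s ∧ 0 < w x} := hpos
    _ = μ ({x | x ∈ s ∧ 0 < w x} \ {x | f x = 0}) := (measure_sdiff_null hf0).symm
    _ ≤ μ (Function.support (fun x => f x * w x) ∩ s) :=
      measure_mono fun x ⟨⟨hxs, hwx⟩, hfx⟩ => ⟨mul_ne_zero hfx hwx.ne', hxs⟩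

variable {I : Set ℝ} {w : ℝ → ℝ}

lemma integrableOn_eval_mul (hI : MeasurableSet I) (hw : ∀ x ∈ I, 0 ≤ w x)
    (hmom : ∀ k : ℕ, IntegrableOn (fun x => |x| ^ k * w x) I) (p : ℝ[X]) :
    IntegrableOn (fun x => p.eval x * w x) I := by
  have hwm : AEStronglyMeasurable w (volume.restrict I) := by
    simpa using (hmom 0).aestronglyMeasurable
  have hk : ∀ k : ℕ, IntegrableOn (fun x => x ^ k * w x) I := fun k =>
    Integrable.mono' (hmom k) ((continuous_pow k).aestronglyMeasurable.mul hwm) <| by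
      filter_upwards [ae_restrict_mem hI] with x hx
      rw [Real.norm_eq_abs, abs_mul, abs_pow, abs_of_nonneg (hw x hx)]
  have heq : (fun x => p.eval x * w x) =
      fun x => ∑ k ∈ Finset.range (p.natDegree + 1), p.coeff k * (x ^ k * w x) := by
    funext x
    rw [eval_eq_sum_range, Finset.sum_mul]
    exact Finset.sum_congr rfl fun k _ => by ring
  rw [heq]
  exact integrable_finsetSum _ fun k _ => (hk k).const_mul _

lemma setIntegral_eval_mul_eval_mul_eq_zero {P : ℝ[X]} {m : ℕ}
    (hint : ∀ k : ℕ, IntegrableOn (fun x => P.eval x * x ^ k * w x) I)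
    (horth : ∀ k < m, ∫ x in I, P.eval x * x ^ k * w x = 0)
    {q : ℝ[X]} (hq : q.natDegree < m) : ∫ x in I, P.eval x * q.eval x * w x = 0 := by
  have heq : (fun x => P.eval x * q.eval x * w x) =
      fun x => ∑ k ∈ Finset.range m, q.coeff k * (P.eval x * x ^ k * w x) := by
    funext x
    rw [eval_eq_sum_range' hq, Finset.mul_sum, Finset.sum_mul]
    exact Finset.sum_congr rfl fun k _ => by ring
  rw [heq, integral_finsetSum _ fun k _ => (hint k).const_mul _]
  exact Finset.sum_eq_zero fun k hk => by
    rw [integral_const_mul, horth k (Finset.mem_range.1 hk), mul_zero]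

lemma setIntegral_eval_mul_ne_zero (hI : I.OrdConnected) {f : ℝ[X]} (hf : f ≠ 0)
    (heven : ∀ x ∈ interior I, Even (f.rootMultiplicity x)) (hw : ∀ x ∈ I, 0 ≤ w x)
    (hfw : IntegrableOn (fun x => f.eval x * w x) I)
    (hpos : 0 < volume {x | x ∈ I ∧ 0 < w x}) :
    ∫ x in I, f.eval x * w x ≠ 0 := by
  have hinterior : ∀ᵐ x ∂volume.restrict I, x ∈ interior I := by
    rw [← Measure.restrict_congr_set
      (interior_ae_eq_of_null_frontier (hI.convex.addHaar_frontier volume))]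
    exact ae_restrict_mem isOpen_interior.measurableSet
  have hroots : volume {x | f.eval x = 0} = 0 :=
    (finite_setOfPred_isRoot hf).measure_zero volume
  rcases eval_nonneg_or_eval_nonpos_of_even_rootMultiplicity
    hI.convex.interior.ordConnected hf heven with hnonneg | hnonpos
  · exact (setIntegral_mul_pos hI.measurableSet (hinterior.mono hnonneg) hroots hw hfw
      hpos).ne'
  · have hneg := setIntegral_mul_pos (f := fun x => -f.eval x) hI.measurableSet
      (hinterior.mono fun x hx => neg_nonneg.2 (hnonpos x hx)) (by simpa using hroots) hw
      (by simp only [neg_mul]; exact hfw.neg) hpos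
    simp only [neg_mul, integral_neg] at hneg
    exact (neg_pos.1 hneg).ne

theorem le_card_oddRootsIn_interior (hI : I.OrdConnected) (hw : ∀ x ∈ I, 0 ≤ w x)
    (hmom : ∀ k : ℕ, IntegrableOn (fun x => |x| ^ k * w x) I)
    (hpos : 0 < volume {x | x ∈ I ∧ 0 < w x}) {P : ℝ[X]} (hP : P ≠ 0) {m : ℕ}
    (horth : ∀ k < m, ∫ x in I, P.eval x * x ^ k * w x = 0) :
    m ≤ (P.oddRootsIn (interior I)).card := by
  by_contra! hlt
  have hQ : (∏ a ∈ P.oddRootsIn (interior I), (X - C a)).natDegree < m := by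
    rwa [natDegree_finsetProd_X_sub_C_eq_card]
  have hint : ∀ k : ℕ, IntegrableOn (fun x => P.eval x * x ^ k * w x) I := fun k => by
    have := integrableOn_eval_mul hI.measurableSet hw hmom (P * X ^ k)
    simp only [eval_mul, eval_pow, eval_X] at this
    exact this
  refine setIntegral_eval_mul_ne_zero hI (mul_ne_zero hP (monic_prod_X_sub_C _ _).ne_zero)
    (fun x hx => even_rootMultiplicity_mul_prod_oddRootsIn hP hx) hw
    (integrableOn_eval_mul hI.measurableSet hw hmom _) hpos ?_
  simpa only [eval_mul, mul_assoc] using setIntegral_eval_mul_eval_mul_eq_zero hint horth hQ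

end Integral

/-- **Angelesco systems**: the type II multiple orthogonal polynomial factors as a
product of `r` polynomials, where the `j`-th factor is monic of degree `n j` and has
exactly `n j` zeros, all simple and all lying in `Δ j`. -/
theorem stmt_0 (r : ℕ) (Δ : Fin r → Set ℝ)
    (hΔ : ∀ j, (Δ j).OrdConnected)
    (hdisj : Pairwise fun i j => Disjoint (interior (Δ i)) (interior (Δ j)))
    (w : Fin r → ℝ → ℝ)
    (hw_nonneg : ∀ j, ∀ x ∈ Δ j, 0 ≤ w j x)
    (hw_moments : ∀ j (k : ℕ), IntegrableOn (fun x => |x| ^ k * w j x) (Δ j))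
    (hw_pos : ∀ j, 0 < volume {x | x ∈ Δ j ∧ 0 < w j x})
    (n : Fin r → ℕ) (P : Polynomial ℝ)
    (hmonic : P.Monic) (hdeg : P.natDegree = ∑ j, n j)
    (horth : ∀ j, ∀ k < n j, ∫ x in Δ j, P.eval x * x ^ k * w j x = 0) :
    ∃ q : Fin r → Polynomial ℝ,
      P = ∏ j, q j ∧
      ∀ j, (q j).Monic ∧ (q j).natDegree = n j ∧
        Multiset.card (q j).roots = n j ∧ (q j).roots.Nodup ∧
        ∀ x ∈ (q j).roots, x ∈ Δ j := by
  set T := fun j => P.oddRootsIn (interior (Δ j))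
  have hTroots : ∀ j, (T j).val ⊆ P.roots := fun j x hx => (mem_oddRootsIn.1 hx).1
  have hTdisj : Pairwise fun i j => Disjoint (T i) (T j) := fun i j hij =>
    Finset.disjoint_left.2 fun x hi hj =>
      (hdisj hij).le_bot ⟨(mem_oddRootsIn.1 hi).2.1, (mem_oddRootsIn.1 hj).2.1⟩
  obtain ⟨hcard, hprod⟩ := hmonic.eq_prod_prod_X_sub_C T hTroots hTdisj n
    (fun j => le_card_oddRootsIn_interior (hΔ j) (hw_nonneg j) (hw_moments j) (hw_pos j)
      hmonic.ne_zero (horth j)) hdeg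
  refine ⟨fun j => ∏ x ∈ T j, (X - C x), hprod,
    fun j => ⟨monic_prod_X_sub_C _ _, ?_, ?_, ?_, ?_⟩⟩
  · rw [natDegree_finsetProd_X_sub_C_eq_card, hcard j]
  · rw [roots_prod_X_sub_C, Finset.card_val, hcard j]
  · rw [roots_prod_X_sub_C]
    exact (T j).nodup
  · intro x hx
    rw [roots_prod_X_sub_C] at hx
    exact interior_subset (mem_oddRootsIn.1 hx).2.1
end

section
/- Let α > 0 and β > −1, let P be the monic polynomial of degree n with ∫_0^1 P(x) x^{β}(1−x)^{α} x^k dx = 0 for k = 0, …, n−1, and let Q be the monic polynomial of degree n with ∫_0^1 Q(x) x^{β+1}(1−x)^{α−1} x^k dx = 0 for k = 0, …, n−1. Then for all x ∈ (0,1): d/dx [ (1−x)^α P(x) ] = −(α + n) (1−x)^{α−1} Q(x). -/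
/-!
Write `R = (1 - X) P' - α P`, so that `d/dx [(1-x)^α P] = (1-x)^(α-1) R`. Integrating
`d/dx [(1-x)^α P(x) x^(β+1+k)]` over `(0,1)` (the boundary terms vanish since `α > 0`) shows that
`R` is orthogonal to every `x^k`, `k < n`, for the weight `x^(β+1) (1-x)^(α-1)`. The leading
coefficient of `R` is `-(α + n)`, so `R + (α + n) Q` has degree `< n` and is orthogonal to itself,
hence vanishes.
-/

open MeasureTheory Polynomial Set

section JacobiWeight

variable {γ δ : ℝ}

lemma intervalIntegrable_rpow_mul_one_sub_rpow (hγ : -1 < γ) (hδ : -1 < δ) :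
    IntervalIntegrable (fun x : ℝ => x ^ γ * (1 - x) ^ δ) volume 0 1 := by
  have left : ∀ {u v : ℝ}, -1 < u →
      IntervalIntegrable (fun x : ℝ => x ^ u * (1 - x) ^ v) volume 0 (1 / 2) := by
    intro u v hu
    refine (intervalIntegral.intervalIntegrable_rpow' hu).mul_continuousOn
      (ContinuousOn.rpow_const (by fun_prop) fun x hx => Or.inl ?_)
    rw [uIcc_of_le (by norm_num)] at hx
    linarith [hx.2]
  refine (left hγ).trans ?_
  rw [IntervalIntegrable.iff_comp_neg]
  convert ((left (v := γ) hδ).comp_add_right 1).symm using 1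
  · ext x; ring_nf
  all_goals norm_num

lemma integrableOn_mul_rpow_mul_one_sub_rpow (hγ : -1 < γ) (hδ : -1 < δ) {f : ℝ → ℝ}
    (hf : ContinuousOn f (Icc 0 1)) :
    IntegrableOn (fun x => f x * (x ^ γ * (1 - x) ^ δ)) (Ioo 0 1) := by
  rw [← uIcc_of_le zero_le_one] at hf
  have h := (intervalIntegrable_rpow_mul_one_sub_rpow hγ hδ).continuousOn_mul hf
  rw [intervalIntegrable_iff_integrableOn_Ioo_of_le zero_le_one] at h
  exact h

lemma integrableOn_eval_mul_rpow_mul_one_sub_rpow_mul_pow (hγ : -1 < γ) (hδ : -1 < δ)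
    (p : ℝ[X]) (k : ℕ) :
    IntegrableOn (fun x => p.eval x * (x ^ γ * (1 - x) ^ δ) * x ^ k) (Ioo 0 1) :=
  (integrableOn_mul_rpow_mul_one_sub_rpow hγ hδ (f := fun x => p.eval x * x ^ k)
    (by fun_prop)).congr_fun (fun x _ => by ring) measurableSet_Ioo

lemma integral_eval_add_C_mul_mul_rpow_mul_one_sub_rpow_mul_pow (hγ : -1 < γ) (hδ : -1 < δ)
    (p q : ℝ[X]) (c : ℝ) (k : ℕ) :
    ∫ x in Ioo (0:ℝ) 1, (p + C c * q).eval x * (x ^ γ * (1 - x) ^ δ) * x ^ k =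
      (∫ x in Ioo (0:ℝ) 1, p.eval x * (x ^ γ * (1 - x) ^ δ) * x ^ k) +
        c * ∫ x in Ioo (0:ℝ) 1, q.eval x * (x ^ γ * (1 - x) ^ δ) * x ^ k := by
  rw [← integral_const_mul, ← integral_add
    (integrableOn_eval_mul_rpow_mul_one_sub_rpow_mul_pow hγ hδ p k)
    ((integrableOn_eval_mul_rpow_mul_one_sub_rpow_mul_pow hγ hδ q k).const_mul c)]
  congr 1 with x
  simp only [eval_add, eval_mul, eval_C]
  ring

lemma integral_eval_mul_rpow_mul_one_sub_rpow_mul_eval_eq_zero (hγ : -1 < γ) (hδ : -1 < δ)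
    {p q : ℝ[X]} {n : ℕ} (hq : q.natDegree < n)
    (hp : ∀ k < n, ∫ x in Ioo (0:ℝ) 1, p.eval x * (x ^ γ * (1 - x) ^ δ) * x ^ k = 0) :
    ∫ x in Ioo (0:ℝ) 1, p.eval x * (x ^ γ * (1 - x) ^ δ) * q.eval x = 0 := by
  have hsum : ∀ x, p.eval x * (x ^ γ * (1 - x) ^ δ) * q.eval x =
      ∑ k ∈ Finset.range n, q.coeff k * (p.eval x * (x ^ γ * (1 - x) ^ δ) * x ^ k) := by
    intro x
    rw [eval_eq_sum_range' hq, Finset.mul_sum]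
    exact Finset.sum_congr rfl fun k _ => by ring
  simp_rw [hsum]
  rw [integral_finsetSum _ fun k _ =>
    (integrableOn_eval_mul_rpow_mul_one_sub_rpow_mul_pow hγ hδ p k).const_mul (q.coeff k)]
  exact Finset.sum_eq_zero fun k hk => by
    rw [integral_const_mul, hp k (Finset.mem_range.mp hk), mul_zero]

lemma integral_eval_mul_rpow_mul_one_sub_rpow_mul_eval_self_pos (hγ : -1 < γ) (hδ : -1 < δ)
    {p : ℝ[X]} (hp : p ≠ 0) :
    0 < ∫ x in Ioo (0:ℝ) 1, p.eval x * (x ^ γ * (1 - x) ^ δ) * p.eval x := by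
  have hpos : ∀ x ∈ Ioo (0:ℝ) 1, p.eval x ≠ 0 →
      0 < p.eval x * (x ^ γ * (1 - x) ^ δ) * p.eval x := fun x hx hpx => by
    have hw : 0 < x ^ γ * (1 - x) ^ δ :=
      mul_pos (Real.rpow_pos_of_pos hx.1 γ) (Real.rpow_pos_of_pos (by linarith [hx.2]) δ)
    nlinarith [mul_self_pos.mpr hpx]
  have hnonneg : 0 ≤ᵐ[volume.restrict (Ioo (0:ℝ) 1)]
      fun x => p.eval x * (x ^ γ * (1 - x) ^ δ) * p.eval x := by
    filter_upwards [ae_restrict_mem measurableSet_Ioo] with x hx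
    by_cases hpx : p.eval x = 0
    · simp [hpx]
    · exact (hpos x hx hpx).le
  rw [setIntegral_pos_iff_support_of_nonneg_ae hnonneg
    ((integrableOn_mul_rpow_mul_one_sub_rpow hγ hδ (f := fun x => p.eval x * p.eval x)
      (by fun_prop)).congr_fun (fun x _ => by ring) measurableSet_Ioo)]
  calc (0 : ENNReal) < volume (Ioo (0:ℝ) 1 \ p.rootSet ℝ) := by
        rw [measure_sdiff_null ((p.rootSet_finite ℝ).measure_zero volume)]
        simp
    _ ≤ _ := by
        refine measure_mono fun x ⟨hx, hpx⟩ => ⟨(hpos x hx fun h => hpx ?_).ne', hx⟩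
        simp [mem_rootSet, hp, h]

lemma eq_zero_of_degree_lt_of_integral_eval_mul_rpow_mul_one_sub_rpow_mul_pow_eq_zero
    (hγ : -1 < γ) (hδ : -1 < δ) {p : ℝ[X]} {n : ℕ} (hdeg : p.degree < n)
    (horth : ∀ k < n, ∫ x in Ioo (0:ℝ) 1, p.eval x * (x ^ γ * (1 - x) ^ δ) * x ^ k = 0) :
    p = 0 := by
  by_contra hp
  have hzero := integral_eval_mul_rpow_mul_one_sub_rpow_mul_eval_eq_zero hγ hδ
    ((natDegree_lt_iff_degree_lt hp).mpr hdeg) horth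
  exact (integral_eval_mul_rpow_mul_one_sub_rpow_mul_eval_self_pos hγ hδ hp).ne' hzero

end JacobiWeight

lemma hasDerivAt_one_sub_rpow_mul_eval (α : ℝ) (p : ℝ[X]) {x : ℝ} (hx : x < 1) :
    HasDerivAt (fun y => (1 - y) ^ α * p.eval y)
      ((1 - x) ^ (α - 1) * ((1 - X) * derivative p - C α * p).eval x) x := by
  have hx' : 0 < 1 - x := sub_pos.mpr hx
  have hpow : HasDerivAt (fun y : ℝ => (1 - y) ^ α) (-(α * (1 - x) ^ (α - 1))) x := by
    simpa using ((hasDerivAt_id x).const_sub 1).rpow_const (p := α) (Or.inl hx'.ne')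
  refine (hpow.mul (p.hasDerivAt x)).congr_deriv ?_
  rw [show (1 - x) ^ α = (1 - x) ^ (α - 1) * (1 - x) by
    rw [← Real.rpow_add_one hx'.ne', sub_add_cancel]]
  simp only [eval_sub, eval_mul, eval_one, eval_X, eval_C]
  ring

lemma integral_eval_one_sub_X_mul_derivative_sub_C_mul_mul_pow {α β : ℝ} (hα : 0 < α)
    (hβ : -1 < β) (p : ℝ[X]) (k : ℕ) :
    ∫ x in Ioo (0:ℝ) 1, ((1 - X) * derivative p - C α * p).eval x *
        (x ^ (β + 1) * (1 - x) ^ (α - 1)) * x ^ k =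
      -(β + 1 + k) * ∫ x in Ioo (0:ℝ) 1, p.eval x * (x ^ β * (1 - x) ^ α) * x ^ k := by
  set m : ℝ := β + 1 + k
  have hm : 0 < m := by have := k.cast_nonneg (α := ℝ); linarith
  have hR := integrableOn_eval_mul_rpow_mul_one_sub_rpow_mul_pow (by linarith : -1 < β + 1)
    (by linarith : -1 < α - 1) ((1 - X) * derivative p - C α * p) k
  have hp := integrableOn_eval_mul_rpow_mul_one_sub_rpow_mul_pow hβ (by linarith : -1 < α) p k
  have hderiv : ∀ x ∈ Ioo (0:ℝ) 1, HasDerivAt (fun y => (1 - y) ^ α * p.eval y * y ^ m)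
      (((1 - X) * derivative p - C α * p).eval x * (x ^ (β + 1) * (1 - x) ^ (α - 1)) * x ^ k +
        m * (p.eval x * (x ^ β * (1 - x) ^ α) * x ^ k)) x := by
    intro x hx
    refine ((hasDerivAt_one_sub_rpow_mul_eval α p hx.2).mul
      (Real.hasDerivAt_rpow_const (p := m) (Or.inl hx.1.ne'))).congr_deriv ?_
    have hxm : x ^ m = x ^ (β + 1) * x ^ k := by rw [Real.rpow_add hx.1, Real.rpow_natCast]
    have hxm' : x ^ (m - 1) = x ^ β * x ^ k := by
      rw [show m - 1 = β + k by ring, Real.rpow_add hx.1, Real.rpow_natCast]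
    have hα' : (1 - x) ^ α = (1 - x) ^ (α - 1) * (1 - x) := by
      rw [← Real.rpow_add_one (by linarith [hx.2]), sub_add_cancel]
    rw [hxm, hxm', hα']
    ring
  have hcont : ContinuousOn (fun y : ℝ => (1 - y) ^ α * p.eval y * y ^ m) (Icc 0 1) :=
    (((Real.continuous_rpow_const hα.le).comp (continuous_const.sub continuous_id)).mul
      p.continuous |>.mul (Real.continuous_rpow_const hm.le)).continuousOn
  have hFTC := intervalIntegral.integral_eq_sub_of_hasDerivAt_of_le zero_le_one hcont hderiv
    ((intervalIntegrable_iff_integrableOn_Ioo_of_le zero_le_one).mpr (hR.add (hp.const_mul m)))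
  rw [intervalIntegral.integral_of_le zero_le_one, integral_Ioc_eq_integral_Ioo,
    integral_add hR (hp.const_mul m), integral_const_mul] at hFTC
  simp only [sub_self, Real.zero_rpow hα.ne', Real.zero_rpow hm.ne', zero_mul, mul_zero,
    sub_zero] at hFTC
  linarith

lemma coeff_X_mul_derivative {R : Type*} [Semiring R] (p : R[X]) (j : ℕ) :
    (X * derivative p).coeff j = j * p.coeff j := by
  cases j with
  | zero => simp
  | succ i => rw [coeff_X_mul, coeff_derivative, ← Nat.cast_succ, Nat.cast_comm]

lemma degree_one_sub_X_mul_derivative_sub_C_mul_add_C_mul_lt {α : ℝ} {n : ℕ} {p q : ℝ[X]}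
    (hp : p.Monic) (hq : q.Monic) (hpn : p.natDegree = n) (hqn : q.natDegree = n) :
    ((1 - X) * derivative p - C α * p + C (α + n) * q).degree < (n : WithBot ℕ) := by
  rw [degree_lt_iff_coeff_zero]
  intro j hj
  have hder : (derivative p).coeff j = 0 := by
    rw [coeff_derivative, coeff_eq_zero_of_natDegree_lt (by omega), zero_mul]
  have hqp : q.coeff j = p.coeff j := by
    rcases hj.eq_or_lt with hjn | hlt
    · rw [← hjn, ← hpn, hp.coeff_natDegree, ← hqn.trans hpn.symm, hq.coeff_natDegree]
    · rw [coeff_eq_zero_of_natDegree_lt (by omega), coeff_eq_zero_of_natDegree_lt (by omega)]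
  have hpj : ((n : ℝ) - j) * p.coeff j = 0 := by
    rcases hj.eq_or_lt with rfl | hlt
    · rw [sub_self, zero_mul]
    · rw [coeff_eq_zero_of_natDegree_lt (by omega), mul_zero]
  -- for `j ≥ n` the `j`-th coefficient is `(n - j) pⱼ`
  simp only [coeff_add, coeff_sub, sub_mul, one_mul, coeff_C_mul, coeff_X_mul_derivative, hder,
    hqp]
  linear_combination hpj

/-- Lemma (first derivative): for the monic Jacobi polynomials on `[0,1]`,
`d/dx [(1-x)^α P_n^{(α,β)}(x)] = -(α+n) (1-x)^{α-1} P_n^{(α-1,β+1)}(x)` on `(0,1)`. -/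
theorem stmt_3 (α β : ℝ) (hα : 0 < α) (hβ : -1 < β) (n : ℕ)
    (P Q : Polynomial ℝ)
    (hPm : P.Monic) (hPdeg : P.natDegree = n)
    (hPorth : ∀ k < n,
      ∫ x in Set.Ioo (0:ℝ) 1, P.eval x * (x ^ β * (1 - x) ^ α) * x ^ k = 0)
    (hQm : Q.Monic) (hQdeg : Q.natDegree = n)
    (hQorth : ∀ k < n,
      ∫ x in Set.Ioo (0:ℝ) 1, Q.eval x * (x ^ (β + 1) * (1 - x) ^ (α - 1)) * x ^ k = 0) :
    ∀ x ∈ Set.Ioo (0:ℝ) 1,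
      HasDerivAt (fun y => (1 - y) ^ α * P.eval y)
        (-(α + n) * (1 - x) ^ (α - 1) * Q.eval x) x := by
  have hvanish : (1 - X) * derivative P - C α * P + C (α + n) * Q = 0 := by
    refine eq_zero_of_degree_lt_of_integral_eval_mul_rpow_mul_one_sub_rpow_mul_pow_eq_zero
      (by linarith : -1 < β + 1) (by linarith : -1 < α - 1)
      (degree_one_sub_X_mul_derivative_sub_C_mul_add_C_mul_lt hPm hQm hPdeg hQdeg) fun k hk => ?_
    rw [integral_eval_add_C_mul_mul_rpow_mul_one_sub_rpow_mul_pow (by linarith) (by linarith),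
      integral_eval_one_sub_X_mul_derivative_sub_C_mul_mul_pow hα hβ, hPorth k hk, hQorth k hk]
    ring
  intro x hx
  convert hasDerivAt_one_sub_rpow_mul_eval α P hx.2 using 1
  rw [eq_neg_of_add_eq_zero_left hvanish]
  simp only [eval_neg, eval_mul, eval_C]
  ring
end

section
/- Let α_0, α_1, α_2 > −1 and let n, m be nonnegative integers. Define F : (0,1) → ℝ by F(x) = (1−x)^{−α_0} x^{−α_1} (d^n/dx^n) [ x^{α_1−α_2+n} (d^m/dx^m) ( x^{α_2+m} (1−x)^{α_0+n+m} ) ]. Then the function P(x) = (−1)^{n+m} F(x) / [ (n+m+α_0+α_1+1)_n (n+m+α_0+α_2+1)_m ] coincides on (0,1) with a monic polynomial of degree n + m that satisfies ∫_0^1 P(x) x^{α_1}(1−x)^{α_0} x^k dx = 0 for k = 0,…,n−1 and ∫_0^1 P(x) x^{α_2}(1−x)^{α_0} x^k dx = 0 for k = 0,…,m−1. Here (a)_j denotes the Pochhammer symbol a(a+1)⋯(a+j−1). -/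
open MeasureTheory Polynomial

namespace JPaux

noncomputable def step (a b : ℝ) (S : ℝ[X]) : ℝ[X] :=
  C a * S - C (a + b) * (X * S) + X * derivative S - X * (X * derivative S)

noncomputable def Phi : ℕ → ℝ → ℝ → ℝ[X] → ℝ[X]
  | 0, _, _, S => S
  | k + 1, a, b, S => step (a + 1) (b + 1) (Phi k (a + 1) (b + 1) S)

noncomputable def fab (a b : ℝ) (S : ℝ[X]) : ℝ → ℝ :=
  fun x => x ^ a * (1 - x) ^ b * S.eval x

lemma hasDerivAt_fab (a b : ℝ) (S : ℝ[X]) {x : ℝ} (hx : x ∈ Set.Ioo (0:ℝ) 1) :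
    HasDerivAt (fab a b S) (fab (a-1) (b-1) (step a b S) x) x := by
  obtain ⟨hx0, hx1⟩ := hx
  have h1x : (0:ℝ) < 1 - x := by linarith
  have hxa : HasDerivAt (fun y : ℝ => y ^ a) (a * x ^ (a-1)) x :=
    Real.hasDerivAt_rpow_const (Or.inl hx0.ne')
  have hxb : HasDerivAt (fun y : ℝ => (1 - y) ^ b) (-(b * (1-x) ^ (b-1))) x := by
    have h := (Real.hasDerivAt_rpow_const (x := 1 - x) (p := b) (Or.inl h1x.ne')).comp x
      ((hasDerivAt_id x).const_sub 1)
    simpa [mul_comm, Function.comp_def] using h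
  have hS := S.hasDerivAt x
  have H : HasDerivAt (fun y => y ^ a * (1 - y) ^ b * S.eval y) _ x := (hxa.mul hxb).mul hS
  have e1 : x ^ a = x ^ (a-1) * x := by
    rw [← Real.rpow_add_one hx0.ne', sub_add_cancel]
  have e2 : (1-x) ^ b = (1-x) ^ (b-1) * (1-x) := by
    rw [← Real.rpow_add_one h1x.ne', sub_add_cancel]
  refine H.congr_deriv ?_
  simp only [fab, step, eval_sub, eval_add, eval_mul, eval_C, eval_X, eval_one, Pi.mul_apply]
  rw [e1, e2]
  ring

lemma hasDerivAt_fab_Phi (a b : ℝ) (k : ℕ) (S : ℝ[X]) {x : ℝ} (hx : x ∈ Set.Ioo (0:ℝ) 1) :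
    HasDerivAt (fab (a+1) (b+1) (Phi k (a+1) (b+1) S)) (fab a b (Phi (k+1) a b S) x) x := by
  have h := hasDerivAt_fab (a+1) (b+1) (Phi k (a+1) (b+1) S) hx
  simpa [Phi, add_sub_cancel_right] using h

lemma iteratedDeriv_congr_Ioo {f g : ℝ → ℝ} (k : ℕ) (h : Set.EqOn f g (Set.Ioo (0:ℝ) 1)) :
    Set.EqOn (iteratedDeriv k f) (iteratedDeriv k g) (Set.Ioo (0:ℝ) 1) := by
  induction k with
  | zero => simpa using h
  | succ k ih =>
    intro x hx
    rw [iteratedDeriv_succ, iteratedDeriv_succ]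
    exact Filter.EventuallyEq.deriv_eq <| (isOpen_Ioo.eventually_mem hx).mono fun y hy => ih hy

lemma iteratedDeriv_fab (k : ℕ) (a b : ℝ) (S : ℝ[X]) :
    ∀ x ∈ Set.Ioo (0:ℝ) 1,
      iteratedDeriv k (fab (a + k) (b + k) S) x = fab a b (Phi k a b S) x := by
  induction k generalizing a b with
  | zero => intro x hx; simp [Phi]
  | succ k ih =>
    intro x hx
    have e1 : a + ((k:ℕ)+1 : ℕ) = (a+1) + (k:ℕ) := by push_cast; ring
    have e2 : b + ((k:ℕ)+1 : ℕ) = (b+1) + (k:ℕ) := by push_cast; ring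
    rw [e1, e2, iteratedDeriv_succ]
    have hev : iteratedDeriv k (fab ((a+1) + (k:ℕ)) ((b+1) + (k:ℕ)) S) =ᶠ[nhds x]
        fab (a+1) (b+1) (Phi k (a+1) (b+1) S) :=
      (isOpen_Ioo.eventually_mem hx).mono fun y hy => ih (a+1) (b+1) y hy
    rw [hev.deriv_eq]
    exact (hasDerivAt_fab_Phi a b k S hx).deriv

lemma natDegree_step_le {S : ℝ[X]} {d : ℕ} (hS : S.natDegree ≤ d) (a b : ℝ) :
    (step a b S).natDegree ≤ d + 1 := by
  have h1 : (C a * S).natDegree ≤ d + 1 :=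
    le_trans (natDegree_mul_le) (by simp; omega)
  have h2 : (C (a+b) * (X * S)).natDegree ≤ d + 1 :=
    le_trans (natDegree_mul_le) (by
      have := natDegree_mul_le (p := (X:ℝ[X])) (q := S)
      simp at this ⊢; omega)
  have hd' : (derivative S).natDegree ≤ d - 1 :=
    le_trans (natDegree_derivative_le S) (by omega)
  rcases Nat.eq_zero_or_pos d with rfl | hd
  · have hS0 : derivative S = 0 := by
      obtain ⟨c, rfl⟩ := Polynomial.natDegree_eq_zero.mp (le_antisymm hS (Nat.zero_le _))
      simp
    have : step a b S = C a * S - C (a+b) * (X * S) := by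
      simp [step, hS0]
    rw [this]
    exact le_trans (natDegree_sub_le _ _) (by omega)
  · have h3 : (X * derivative S).natDegree ≤ d + 1 :=
      le_trans natDegree_mul_le (by simp; omega)
    have h4 : (X * (X * derivative S)).natDegree ≤ d + 1 :=
      le_trans natDegree_mul_le (by
        have h5 : (X * derivative S).natDegree ≤ d := le_trans natDegree_mul_le (by simp; omega)
        simp; omega)
    exact le_trans (natDegree_sub_le _ _)
      (by
        have := le_trans (natDegree_add_le (C a * S - C (a+b) * (X*S)) (X * derivative S))
          (max_le (le_trans (natDegree_sub_le _ _) (max_le h1 h2)) h3)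
        omega)

lemma coeff_step {S : ℝ[X]} {d : ℕ} (hS : S.natDegree ≤ d) (a b : ℝ) :
    (step a b S).coeff (d+1) = -(a + b + d) * S.coeff d := by
  have hS1 : S.coeff (d+1) = 0 := coeff_eq_zero_of_natDegree_lt (by omega)
  have hXS : (X * S).coeff (d+1) = S.coeff d := coeff_X_mul S d
  have hDS : (derivative S).coeff d = S.coeff (d+1) * (d+1) := coeff_derivative S d
  rcases d with _ | e
  · have h0 : (X * (X * derivative S)).coeff 1 = (X * derivative S).coeff 0 := coeff_X_mul _ 0
    have h00 : (X * derivative S).coeff 0 = 0 := by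
      rw [Polynomial.mul_coeff_zero]; simp
    norm_num at hXS hDS hS1 ⊢
    have hXS1 : (X * S).coeff 1 = S.coeff 0 := by simpa using coeff_X_mul S 0
    have hXd : (X * derivative S).coeff 1 = (derivative S).coeff 0 := by
      simpa using coeff_X_mul (derivative S) 0
    simp only [step, coeff_sub, coeff_add, coeff_C_mul, hXS1, hXd, hDS, hS1, h0, h00,
      Nat.cast_zero]
    ring
  · have h0 : (X * (X * derivative S)).coeff (e+1+1) = (X * derivative S).coeff (e+1) :=
      coeff_X_mul _ (e+1)
    have h1 : (X * derivative S).coeff (e+1) = (derivative S).coeff e := coeff_X_mul _ e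
    have h2 : (derivative S).coeff e = S.coeff (e+1) * (e+1) := coeff_derivative S e
    simp only [step, coeff_sub, coeff_add, coeff_C_mul, hXS, coeff_X_mul, hDS, hS1, h0, h1, h2]
    push_cast
    ring

lemma natDegree_Phi_le : ∀ (k : ℕ) (a b : ℝ) (S : ℝ[X]) {d : ℕ}, S.natDegree ≤ d →
    (Phi k a b S).natDegree ≤ d + k
  | 0, a, b, S, d, hS => by simpa [Phi] using hS
  | k+1, a, b, S, d, hS => by
    have := natDegree_Phi_le k (a+1) (b+1) S hS
    have h2 := natDegree_step_le this (a+1) (b+1)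
    simpa [Phi, Nat.add_assoc] using h2

lemma coeff_Phi : ∀ (k : ℕ) (a b : ℝ) (S : ℝ[X]) {d : ℕ}, S.natDegree ≤ d →
    (Phi k a b S).coeff (d + k) =
      (-1)^k * (∏ i ∈ Finset.range k, (a + b + d + k + 1 + i)) * S.coeff d
  | 0, a, b, S, d, hS => by simp [Phi]
  | k+1, a, b, S, d, hS => by
    have hdeg := natDegree_Phi_le k (a+1) (b+1) S hS
    have hstep := coeff_step hdeg (a+1) (b+1)
    have ih := coeff_Phi k (a+1) (b+1) S hS
    have : (Phi (k+1) a b S).coeff (d + (k+1))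
        = (step (a+1) (b+1) (Phi k (a+1) (b+1) S)).coeff (d + k + 1) := by
      simp [Phi, Nat.add_assoc]
    rw [this, hstep, ih]
    have hprod : (∏ i ∈ Finset.range (k+1), (a + b + d + (k+1) + 1 + i))
        = (∏ i ∈ Finset.range k, ((a+1) + (b+1) + d + k + 1 + i)) * (a + b + d + (k+1) + 1) := by
      rw [Finset.prod_range_succ']
      congr 1
      · apply Finset.prod_congr rfl; intro i _; push_cast; ring
      · push_cast; ring
    push_cast
    rw [hprod]
    ring

lemma integrableOn_rpow_mul (p q : ℝ) (hp : -1 < p) (hq : -1 < q) (S : ℝ[X]) :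
    IntegrableOn (fun x => x ^ p * (1 - x) ^ q * S.eval x) (Set.Ioo (0:ℝ) 1) := by
  have hcont1 : ContinuousOn (fun x : ℝ => (1 - x) ^ q * S.eval x) (Set.uIcc (0:ℝ) (1/2)) := by
    apply ContinuousOn.mul _ (S.continuousOn_aeval.congr (fun x _ => by simp))
    · apply ContinuousOn.rpow_const (by fun_prop)
      intro x hx
      rw [Set.uIcc_of_le (by norm_num)] at hx
      left
      have := hx.2
      intro h; nlinarith [hx.1, hx.2]
  have half1 : IntervalIntegrable (fun x => x ^ p * ((1 - x) ^ q * S.eval x)) volume 0 (1/2) :=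
    (intervalIntegral.intervalIntegrable_rpow' hp).mul_continuousOn hcont1
  have base2 : IntervalIntegrable (fun x : ℝ => (1 - x) ^ q) volume (1/2) 1 := by
    have h := (intervalIntegral.intervalIntegrable_rpow' (a := 0) (b := 1/2) hq).comp_sub_left 1
    norm_num at h
    exact h.symm
  have hcont2 : ContinuousOn (fun x : ℝ => x ^ p * S.eval x) (Set.uIcc (1/2:ℝ) 1) := by
    apply ContinuousOn.mul _ (S.continuousOn_aeval.congr (fun x _ => by simp))
    · apply ContinuousOn.rpow_const (by fun_prop)
      intro x hx
      rw [Set.uIcc_of_le (by norm_num)] at hx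
      left; intro h; rw [h] at hx; norm_num at hx
  have half2 : IntervalIntegrable (fun x => (1 - x) ^ q * (x ^ p * S.eval x)) volume (1/2) 1 :=
    base2.mul_continuousOn hcont2
  have half2' : IntervalIntegrable (fun x => x ^ p * ((1 - x) ^ q * S.eval x)) volume (1/2) 1 := by
    have : (fun x : ℝ => x ^ p * ((1 - x) ^ q * S.eval x))
        = fun x => (1 - x) ^ q * (x ^ p * S.eval x) := by funext x; ring
    rw [this]; exact half2
  have total : IntervalIntegrable (fun x => x ^ p * ((1 - x) ^ q * S.eval x)) volume 0 1 :=
    half1.trans half2'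
  have := (intervalIntegrable_iff_integrableOn_Ioo_of_le (by norm_num : (0:ℝ) ≤ 1)).mp total
  exact this.congr_fun (fun x _ => by ring) measurableSet_Ioo

lemma ftc_zero (W W' : ℝ → ℝ) (hW : Continuous W) (hW0 : W 0 = 0) (hW1 : W 1 = 0)
    (hd : ∀ x ∈ Set.Ioo (0:ℝ) 1, HasDerivAt W (W' x) x)
    (hint : IntegrableOn W' (Set.Ioo (0:ℝ) 1)) :
    ∫ x in Set.Ioo (0:ℝ) 1, W' x = 0 := by
  have hii : IntervalIntegrable W' volume 0 1 :=
    (intervalIntegrable_iff_integrableOn_Ioo_of_le (by norm_num)).mpr hint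
  have := intervalIntegral.integral_eq_sub_of_hasDeriv_right_of_le (by norm_num : (0:ℝ) ≤ 1)
    hW.continuousOn (fun x hx => (hd x hx).hasDerivWithinAt) hii
  rw [hW1, hW0, sub_zero, intervalIntegral.integral_of_le (by norm_num : (0:ℝ) ≤ 1),
    integral_Ioc_eq_integral_Ioo] at this
  exact this

lemma continuous_rpow_pos {a : ℝ} (ha : 0 < a) : Continuous (fun x : ℝ => x ^ a) :=
  continuous_iff_continuousAt.2 fun x => Real.continuousAt_rpow_const x a (Or.inr ha.le)

lemma continuous_fab {a b : ℝ} (ha : 0 < a) (hb : 0 < b) (S : ℝ[X]) :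
    Continuous (fab a b S) := by
  apply Continuous.mul
  · exact (continuous_rpow_pos ha).mul ((continuous_rpow_pos hb).comp
      (continuous_const.sub continuous_id))
  · exact S.continuous_aeval.congr (fun x => by simp)

lemma fab_zero {a b : ℝ} (ha : 0 < a) (S : ℝ[X]) : fab a b S 0 = 0 := by
  simp [fab, Real.zero_rpow ha.ne']

lemma fab_one {a b : ℝ} (hb : 0 < b) (S : ℝ[X]) : fab a b S 1 = 0 := by
  simp [fab, Real.zero_rpow hb.ne']

lemma integrableOn_poly_fab (a b : ℝ) (ha : -1 < a) (hb : -1 < b) (p S : ℝ[X]) :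
    IntegrableOn (fun x => p.eval x * fab a b S x) (Set.Ioo (0:ℝ) 1) := by
  have h := integrableOn_rpow_mul a b ha hb (p * S)
  exact h.congr_fun (fun x _ => by simp [fab, eval_mul]; ring) measurableSet_Ioo

lemma chain_poly (a b : ℝ) (ha : -1 < a) (hb : -1 < b) :
    ∀ (N : ℕ) (p S : ℝ[X]), derivative^[N] p = 0 →
      ∫ x in Set.Ioo (0:ℝ) 1, p.eval x * fab a b (Phi N a b S) x = 0 := by
  intro N
  induction N generalizing a b with
  | zero =>
    intro p S hp
    simp only [Function.iterate_zero, id] at hp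
    simp [hp]
  | succ N ih =>
    intro p S hp
    set A : ℝ → ℝ := fun x => (derivative p).eval x * fab (a+1) (b+1) (Phi N (a+1) (b+1) S) x
      with hA
    set B : ℝ → ℝ := fun x => p.eval x * fab a b (Phi (N+1) a b S) x with hB
    have hAint : IntegrableOn A (Set.Ioo (0:ℝ) 1) :=
      integrableOn_poly_fab _ _ (by linarith) (by linarith) _ _
    have hBint : IntegrableOn B (Set.Ioo (0:ℝ) 1) := integrableOn_poly_fab _ _ ha hb _ _
    have hW : ∀ x ∈ Set.Ioo (0:ℝ) 1,
        HasDerivAt (fun x => p.eval x * fab (a+1) (b+1) (Phi N (a+1) (b+1) S) x)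
          (A x + B x) x := by
      intro x hx
      have h1 := (p.hasDerivAt x).mul (hasDerivAt_fab_Phi a b N S hx)
      simpa [hA, hB, mul_comm, add_comm, Pi.mul_def] using h1
    have hcont : Continuous (fun x => p.eval x * fab (a+1) (b+1) (Phi N (a+1) (b+1) S) x) :=
      (p.continuous_aeval.congr (fun x => by simp)).mul
        (continuous_fab (by linarith) (by linarith) _)
    have hzero := ftc_zero _ (fun x => A x + B x) hcont
      (by simp [fab_zero (show (0:ℝ) < a+1 by linarith)])
      (by simp [fab_one (show (0:ℝ) < b+1 by linarith)]) hW (hAint.add hBint)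
    have hsplit : ∫ x in Set.Ioo (0:ℝ) 1, (A x + B x) = (∫ x in Set.Ioo (0:ℝ) 1, A x)
        + ∫ x in Set.Ioo (0:ℝ) 1, B x := integral_add hAint hBint
    have hAzero : ∫ x in Set.Ioo (0:ℝ) 1, A x = 0 := by
      apply ih (a+1) (b+1) (by linarith) (by linarith)
      rw [← Function.iterate_succ_apply derivative N p]
      exact hp
    rw [hzero, hAzero, zero_add] at hsplit
    exact hsplit.symm

lemma chain_rpow : ∀ (N : ℕ) (a b β : ℝ), -1 < b → -1 < a + β → ∀ (S : ℝ[X]),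
    ∫ x in Set.Ioo (0:ℝ) 1, x ^ β * fab a b (Phi N a b S) x
      = ((-1)^N * ∏ i ∈ Finset.range N, (β - i)) *
        ∫ x in Set.Ioo (0:ℝ) 1, x ^ (β - N) * fab (a + N) (b + N) S x := by
  intro N
  induction N with
  | zero => intro a b β hb hab S; simp [Phi]
  | succ N ih =>
    intro a b β hb hab S
    have hb1 : (0:ℝ) < b + 1 := by linarith
    have hab1 : (0:ℝ) < β + (a + 1) := by linarith
    set Q := Phi N (a+1) (b+1) S with hQ
    set A : ℝ → ℝ := fun x => β * x ^ (β - 1) * fab (a+1) (b+1) Q x with hA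
    set B : ℝ → ℝ := fun x => x ^ β * fab a b (Phi (N+1) a b S) x with hB
    set M : ℝ → ℝ := fab (β + (a+1)) (b+1) Q with hM
    have hMW : Set.EqOn M (fun x => x ^ β * fab (a+1) (b+1) Q x) (Set.Ioo (0:ℝ) 1) := by
      intro x hx
      simp only [hM, fab]
      rw [Real.rpow_add hx.1]
      ring
    have hd : ∀ x ∈ Set.Ioo (0:ℝ) 1, HasDerivAt M (A x + B x) x := by
      intro x hx
      have h1 : HasDerivAt (fun y : ℝ => y ^ β) (β * x ^ (β - 1)) x :=
        Real.hasDerivAt_rpow_const (Or.inl hx.1.ne')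
      have h2 := h1.mul (hasDerivAt_fab_Phi a b N S hx)
      have h3 : HasDerivAt (fun x => x ^ β * fab (a+1) (b+1) Q x) (A x + B x) x := by
        simpa [hA, hB, hQ, Pi.mul_def] using h2
      exact h3.congr_of_eventuallyEq <| (isOpen_Ioo.eventually_mem hx).mono fun y hy => hMW hy
    have hAint : IntegrableOn A (Set.Ioo (0:ℝ) 1) := by
      have h := integrableOn_rpow_mul (a + β) (b+1) (by linarith) (by linarith) (C β * Q)
      apply h.congr_fun _ measurableSet_Ioo
      intro x hx
      simp only [hA, fab, eval_mul, eval_C]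
      have : x ^ (a + β) = x ^ (β - 1) * x ^ (a + 1) := by
        rw [← Real.rpow_add hx.1]; ring_nf
      rw [this]; ring
    have hBint : IntegrableOn B (Set.Ioo (0:ℝ) 1) := by
      have h := integrableOn_rpow_mul (a + β) b (by linarith) hb (Phi (N+1) a b S)
      apply h.congr_fun _ measurableSet_Ioo
      intro x hx
      simp only [hB, fab]
      have : x ^ (a + β) = x ^ β * x ^ a := by
        rw [← Real.rpow_add hx.1]; ring_nf
      rw [this]; ring
    have hzero := ftc_zero M (fun x => A x + B x) (continuous_fab hab1 hb1 Q)
      (fab_zero hab1 Q) (fab_one hb1 Q) hd (hAint.add hBint)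
    have hsplit : (∫ x in Set.Ioo (0:ℝ) 1, A x) + ∫ x in Set.Ioo (0:ℝ) 1, B x = 0 := by
      rw [← integral_add hAint hBint]; exact hzero
    have hIH := ih (a+1) (b+1) (β-1) (by linarith) (by linarith) S
    have hAval : ∫ x in Set.Ioo (0:ℝ) 1, A x
        = β * (((-1)^N * ∏ i ∈ Finset.range N, (β - 1 - i)) *
          ∫ x in Set.Ioo (0:ℝ) 1, x ^ (β - 1 - N) * fab ((a+1) + N) ((b+1) + N) S x) := by
      rw [← hIH, ← integral_const_mul]
      apply setIntegral_congr_fun measurableSet_Ioo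
      intro x hx
      simp only [hA, hQ]
      ring
    have hBval : ∫ x in Set.Ioo (0:ℝ) 1, B x
        = - (∫ x in Set.Ioo (0:ℝ) 1, A x) := by linarith
    have e1 : β - 1 - (N:ℝ) = β - ((N+1 : ℕ):ℝ) := by push_cast; ring
    have e2 : (a+1) + (N:ℝ) = a + ((N+1 : ℕ):ℝ) := by push_cast; ring
    have e3 : (b+1) + (N:ℝ) = b + ((N+1 : ℕ):ℝ) := by push_cast; ring
    have hprod : ((-1:ℝ)^(N+1) * ∏ i ∈ Finset.range (N+1), (β - i))
        = -(β * ((-1)^N * ∏ i ∈ Finset.range N, (β - 1 - i))) := by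
      rw [Finset.prod_range_succ']
      have : ∀ i ∈ Finset.range N, (β - ((i:ℕ)+1 : ℕ)) = β - 1 - i := by
        intro i _; push_cast; ring
      rw [Finset.prod_congr rfl this]
      push_cast
      ring
    calc ∫ x in Set.Ioo (0:ℝ) 1, x ^ β * fab a b (Phi (N+1) a b S) x
        = ∫ x in Set.Ioo (0:ℝ) 1, B x := rfl
      _ = -(∫ x in Set.Ioo (0:ℝ) 1, A x) := hBval
      _ = ((-1)^(N+1) * ∏ i ∈ Finset.range (N+1), (β - i)) *
          ∫ x in Set.Ioo (0:ℝ) 1, x ^ (β - ((N+1:ℕ):ℝ)) *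
            fab (a + ((N+1:ℕ):ℝ)) (b + ((N+1:ℕ):ℝ)) S x := by
          rw [hAval, hprod, ← e1, ← e2, ← e3]
          ring

end JPaux

open JPaux in
/-- **Rodrigues formula for Jacobi-Piñeiro polynomials** (r = 2): the function
`(-1)^{n+m} (1-x)^{-α₀} x^{-α₁} D^n [x^{α₁-α₂+n} D^m (x^{α₂+m}(1-x)^{α₀+n+m})]`
divided by `(n+m+α₀+α₁+1)_n (n+m+α₀+α₂+1)_m` coincides on `(0,1)` with the monic
Jacobi-Piñeiro polynomial of degree `n+m`. -/
theorem stmt_6 (α₀ α₁ α₂ : ℝ) (h0 : -1 < α₀) (h1 : -1 < α₁) (h2 : -1 < α₂)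
    (n m : ℕ) (F : ℝ → ℝ)
    (hF : ∀ x ∈ Set.Ioo (0:ℝ) 1,
      F x = (1 - x) ^ (-α₀) * x ^ (-α₁) *
        iteratedDeriv n (fun y => y ^ (α₁ - α₂ + n) *
          iteratedDeriv m (fun z => z ^ (α₂ + m) * (1 - z) ^ (α₀ + n + m)) y) x) :
    ∃ P : Polynomial ℝ, P.Monic ∧ P.natDegree = n + m ∧
      (∀ x ∈ Set.Ioo (0:ℝ) 1,
        (-1) ^ (n + m) * F x /
          ((∏ i ∈ Finset.range n, ((n : ℝ) + m + α₀ + α₁ + 1 + i)) *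
           (∏ i ∈ Finset.range m, ((n : ℝ) + m + α₀ + α₂ + 1 + i))) = P.eval x) ∧
      (∀ k < n,
        ∫ x in Set.Ioo (0:ℝ) 1, P.eval x * (x ^ α₁ * (1 - x) ^ α₀) * x ^ k = 0) ∧
      (∀ k < m,
        ∫ x in Set.Ioo (0:ℝ) 1, P.eval x * (x ^ α₂ * (1 - x) ^ α₀) * x ^ k = 0) := by
  set K₁ : ℝ := ∏ i ∈ Finset.range n, ((n : ℝ) + m + α₀ + α₁ + 1 + i) with hK₁
  set K₂ : ℝ := ∏ i ∈ Finset.range m, ((n : ℝ) + m + α₀ + α₂ + 1 + i) with hK₂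
  have hK₁pos : 0 < K₁ := by
    apply Finset.prod_pos
    intro i hi
    have hin : (1:ℝ) ≤ n := by
      have h : 1 ≤ n := Nat.one_le_iff_ne_zero.mpr (by rintro rfl; simp at hi)
      exact_mod_cast h
    have him : (0:ℝ) ≤ m := Nat.cast_nonneg m
    have hii : (0:ℝ) ≤ i := Nat.cast_nonneg i
    linarith
  have hK₂pos : 0 < K₂ := by
    apply Finset.prod_pos
    intro i hi
    have hin : (1:ℝ) ≤ m := by
      have h : 1 ≤ m := Nat.one_le_iff_ne_zero.mpr (by rintro rfl; simp at hi)
      exact_mod_cast h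
    have him : (0:ℝ) ≤ n := Nat.cast_nonneg n
    have hii : (0:ℝ) ≤ i := Nat.cast_nonneg i
    linarith
  set Q : ℝ[X] := Phi m α₂ (α₀ + (n:ℝ)) 1 with hQdef
  set R : ℝ[X] := Phi n α₁ α₀ Q with hRdef
  have hQdegLe : Q.natDegree ≤ m := by
    have := natDegree_Phi_le m α₂ (α₀ + (n:ℝ)) 1 (d := 0) (by simp)
    simpa using this
  have hQcoeff : Q.coeff m = (-1)^m * K₂ := by
    have := coeff_Phi m α₂ (α₀ + (n:ℝ)) 1 (d := 0) (by simp)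
    simp only [Nat.cast_zero, zero_add, Polynomial.coeff_one_zero, mul_one] at this
    rw [hQdef, this, hK₂]
    congr 1
    apply Finset.prod_congr rfl
    intro i _
    push_cast
    ring
  have hRdegLe : R.natDegree ≤ m + n := natDegree_Phi_le n α₁ α₀ Q hQdegLe
  have hRcoeff : R.coeff (n + m) = (-1)^(n+m) * (K₁ * K₂) := by
    have := coeff_Phi n α₁ α₀ Q hQdegLe
    rw [show (m + n) = n + m from by omega] at this
    rw [hRdef, this, hQcoeff, hK₁]
    rw [show ((-1:ℝ))^(n+m) = (-1)^n * (-1)^m from by rw [pow_add]]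
    have : (∏ i ∈ Finset.range n, (α₁ + α₀ + (m:ℝ) + n + 1 + i))
        = ∏ i ∈ Finset.range n, ((n:ℝ) + m + α₀ + α₁ + 1 + i) := by
      apply Finset.prod_congr rfl; intro i _; ring
    rw [this]
    ring
  set L : ℝ := R.coeff (n + m) with hLdef
  have hKne : K₁ * K₂ ≠ 0 := (mul_pos hK₁pos hK₂pos).ne'
  have hLne : L ≠ 0 := by
    rw [hRcoeff]
    intro h
    rcases mul_eq_zero.mp h with h' | h'
    · exact pow_ne_zero _ (by norm_num : (-1:ℝ) ≠ 0) h'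
    · exact hKne h'
  have hRdeg : R.natDegree = n + m := by
    exact le_antisymm (hRdegLe.trans_eq (Nat.add_comm m n)) (le_natDegree_of_ne_zero hLne)
  refine ⟨Polynomial.C L⁻¹ * R, ?_, ?_, ?_, ?_, ?_⟩
  · -- Monic
    have hne : L⁻¹ ≠ 0 := inv_ne_zero hLne
    rw [Polynomial.Monic, Polynomial.leadingCoeff, Polynomial.natDegree_C_mul hne, hRdeg,
      Polynomial.coeff_C_mul]
    exact inv_mul_cancel₀ hLne
  · rw [Polynomial.natDegree_C_mul (inv_ne_zero hLne), hRdeg]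
  · -- representation on (0,1)
    intro x hx
    obtain ⟨hx0, hx1⟩ := hx
    have h1x : (0:ℝ) < 1 - x := by linarith
    have hFx : F x = R.eval x := by
      rw [hF x ⟨hx0, hx1⟩]
      have hinnerfun : (fun z : ℝ => z ^ (α₂ + (m:ℝ)) * (1 - z) ^ (α₀ + (n:ℝ) + (m:ℝ)))
          = fab (α₂ + (m:ℝ)) ((α₀ + (n:ℝ)) + (m:ℝ)) 1 := by
        funext z; simp [fab]
      have hinner : ∀ z ∈ Set.Ioo (0:ℝ) 1,
          iteratedDeriv m (fun z : ℝ => z ^ (α₂ + (m:ℝ)) * (1 - z) ^ (α₀ + (n:ℝ) + (m:ℝ))) z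
            = fab α₂ (α₀ + (n:ℝ)) Q z := by
        intro z hz
        rw [hinnerfun]
        exact iteratedDeriv_fab m α₂ (α₀ + (n:ℝ)) 1 z hz
      have houter : Set.EqOn
          (fun y => y ^ (α₁ - α₂ + (n:ℝ)) *
            iteratedDeriv m (fun z : ℝ => z ^ (α₂ + (m:ℝ)) * (1 - z) ^ (α₀ + (n:ℝ) + (m:ℝ))) y)
          (fab (α₁ + (n:ℝ)) (α₀ + (n:ℝ)) Q) (Set.Ioo (0:ℝ) 1) := by
        intro y hy
        simp only
        rw [hinner y hy]
        simp only [fab]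
        have hmerge : y ^ (α₁ - α₂ + (n:ℝ)) * y ^ α₂ = y ^ (α₁ + (n:ℝ)) := by
          rw [← Real.rpow_add hy.1]; ring_nf
        rw [← hmerge]; ring
      have h3 : iteratedDeriv n
          (fun y => y ^ (α₁ - α₂ + (n:ℝ)) *
            iteratedDeriv m (fun z : ℝ => z ^ (α₂ + (m:ℝ)) * (1 - z) ^ (α₀ + (n:ℝ) + (m:ℝ))) y) x
          = fab α₁ α₀ R x := by
        rw [iteratedDeriv_congr_Ioo n houter ⟨hx0, hx1⟩]
        exact iteratedDeriv_fab n α₁ α₀ Q x ⟨hx0, hx1⟩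
      rw [h3]
      simp only [fab]
      rw [Real.rpow_neg hx0.le, Real.rpow_neg h1x.le]
      field_simp
    rw [hFx, Polynomial.eval_mul, Polynomial.eval_C, hRcoeff]
    have hK : K₁ * K₂ ≠ 0 := hKne
    rw [mul_inv, ← inv_pow, inv_neg, inv_one]
    field_simp
  · -- first orthogonality family
    intro k hk
    have hstep1 : ∫ x in Set.Ioo (0:ℝ) 1,
        (Polynomial.C L⁻¹ * R).eval x * (x ^ α₁ * (1 - x) ^ α₀) * x ^ k
        = ∫ x in Set.Ioo (0:ℝ) 1,
          (Polynomial.C L⁻¹ * Polynomial.X ^ k).eval x * fab α₁ α₀ (Phi n α₁ α₀ Q) x := by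
      apply setIntegral_congr_fun measurableSet_Ioo
      intro x hx
      simp only [Polynomial.eval_mul, Polynomial.eval_C, Polynomial.eval_pow, Polynomial.eval_X,
        fab, ← hRdef]
      ring
    rw [hstep1]
    apply chain_poly α₁ α₀ h1 h0 n (Polynomial.C L⁻¹ * Polynomial.X ^ k) Q
    apply Polynomial.iterate_derivative_eq_zero
    calc (Polynomial.C L⁻¹ * Polynomial.X ^ k : ℝ[X]).natDegree
        ≤ (Polynomial.C L⁻¹ : ℝ[X]).natDegree + (Polynomial.X ^ k : ℝ[X]).natDegree :=
          Polynomial.natDegree_mul_le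
      _ ≤ k := by simp
      _ < n := hk
  · -- second orthogonality family
    intro k hk
    set β : ℝ := α₂ - α₁ + k with hβ
    have hkc : (0:ℝ) ≤ k := Nat.cast_nonneg k
    have hstep1 : ∫ x in Set.Ioo (0:ℝ) 1,
        (Polynomial.C L⁻¹ * R).eval x * (x ^ α₂ * (1 - x) ^ α₀) * x ^ k
        = L⁻¹ * ∫ x in Set.Ioo (0:ℝ) 1, x ^ β * fab α₁ α₀ (Phi n α₁ α₀ Q) x := by
      rw [← integral_const_mul]
      apply setIntegral_congr_fun measurableSet_Ioo
      intro x hx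
      simp only [Polynomial.eval_mul, Polynomial.eval_C, fab, ← hRdef]
      have hmerge : x ^ β * x ^ α₁ = x ^ α₂ * (x:ℝ) ^ (k:ℕ) := by
        rw [← Real.rpow_natCast x k, ← Real.rpow_add hx.1, ← Real.rpow_add hx.1, hβ]
        ring_nf
      linear_combination (-(L⁻¹ * (1 - x) ^ α₀ * R.eval x)) * hmerge
    rw [hstep1]
    have hchain := chain_rpow n α₁ α₀ β h0 (by rw [hβ]; push_cast; linarith) Q
    rw [hchain]
    have hstep3 : ∫ x in Set.Ioo (0:ℝ) 1, x ^ (β - (n:ℝ)) * fab (α₁ + (n:ℝ)) (α₀ + (n:ℝ)) Q x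
        = ∫ x in Set.Ioo (0:ℝ) 1,
          (Polynomial.X ^ k : ℝ[X]).eval x * fab α₂ (α₀ + (n:ℝ)) (Phi m α₂ (α₀ + (n:ℝ)) 1) x := by
      apply setIntegral_congr_fun measurableSet_Ioo
      intro x hx
      simp only [Polynomial.eval_pow, Polynomial.eval_X, fab, ← hQdef]
      have hmerge : x ^ (β - (n:ℝ)) * x ^ (α₁ + (n:ℝ)) = (x:ℝ) ^ (k:ℕ) * x ^ α₂ := by
        rw [← Real.rpow_natCast x k, ← Real.rpow_add hx.1, ← Real.rpow_add hx.1, hβ]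
        ring_nf
      linear_combination ((1 - x) ^ (α₀ + (n:ℝ)) * Q.eval x) * hmerge
    rw [hstep3]
    have hzero : ∫ x in Set.Ioo (0:ℝ) 1,
        (Polynomial.X ^ k : ℝ[X]).eval x * fab α₂ (α₀ + (n:ℝ)) (Phi m α₂ (α₀ + (n:ℝ)) 1) x = 0 := by
      apply chain_poly α₂ (α₀ + (n:ℝ)) h2
        (by have := Nat.cast_nonneg (α := ℝ) n; linarith) m (Polynomial.X ^ k) 1
      apply Polynomial.iterate_derivative_eq_zero
      simpa using hk
    rw [hzero]
    ring
end

section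
/- Let α_1, α_2 > −1 with α_1 − α_2 ∉ ℤ. For each pair of nonnegative integers (n, m), let L_{n,m} denote the monic polynomial of degree n + m satisfying ∫_0^∞ L_{n,m}(x) x^{α_1} e^{−x} x^k dx = 0 for k = 0,…,n−1 and ∫_0^∞ L_{n,m}(x) x^{α_2} e^{−x} x^k dx = 0 for k = 0,…,m−1, and set P_{2n} = L_{n,n}, P_{2n+1} = L_{n+1,n}, with the convention P_j = 0 for j < 0. Then for every N ≥ 0: x P_N(x) = P_{N+1}(x) + b_N P_N(x) + c_N P_{N−1}(x) + d_N P_{N−2}(x), where b_{2n} = 3n + α_1 + 1, b_{2n+1} = 3n + α_2 + 2, c_{2n} = n(3n + α_1 + α_2), c_{2n+1} = 3n² + (α_1 + α_2 + 3)n + α_1 + 1, d_{2n} = n(n + α_1)(n + α_1 − α_2), and d_{2n+1} = n(n + α_2)(n + α_2 − α_1). -/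
/-!
Let `T` be the linear map on `ℝ[X]` sending `X ^ j` to the rising factorial
`X (X + 1) ⋯ (X + j - 1)`. Since `Γ(s + j) = Γ(s) s (s + 1) ⋯ (s + j - 1)`, every moment
of a polynomial against `x ^ γ e ^ (-x)` is an evaluation of its transform:
`∫₀^∞ p(x) x ^ γ e ^ (-x) x ^ k dx = Γ(γ + k + 1) (T p)(γ + k + 1)`.
Hence the orthogonality conditions say that `T L_{n,m}` vanishes at `α₁ + 1, …, α₁ + n` and at
`α₂ + 1, …, α₂ + m`. These `n + m` nodes are distinct because `α₁ - α₂ ∉ ℤ`, and `T` preserves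
monic polynomials and their degrees, so `T L_{n,m} = ∏ᵢ (X - α₁ - i) ∏ⱼ (X - α₂ - j)`.
Finally `T (X p) = X (T p)(X + 1)` and `T` is injective, so each recurrence reduces to a cubic
identity between these explicit products.
-/

open MeasureTheory Polynomial

namespace Polynomial

open Finset

theorem Monic.eq_prod_X_sub_C_of_eval_eq_zero {R ι : Type*} [CommRing R] [IsDomain R]
    {p : R[X]} (hp : p.Monic) {s : Finset ι} {v : ι → R} (hv : Set.InjOn v s)
    (hdeg : p.natDegree = #s) (hroot : ∀ i ∈ s, p.eval (v i) = 0) :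
    p = ∏ i ∈ s, (X - C (v i)) := by
  have hdeg' : p.degree = #s := by rw [degree_eq_natDegree hp.ne_zero, hdeg]
  refine eq_of_degree_le_of_eval_index_eq s hv hdeg'.le ?_ ?_ fun i hi => ?_
  · rw [hdeg', degree_eq_natDegree (monic_prod_X_sub_C v s).ne_zero,
      natDegree_finsetProd_X_sub_C_eq_card]
  · rw [hp.leadingCoeff, (monic_prod_X_sub_C v s).leadingCoeff]
  · rw [hroot i hi, eval_prod, prod_eq_zero hi (by simp)]

section AscPochhammerTransform

variable {R : Type*} [CommSemiring R]

noncomputable def toAscPochhammer : R[X] →ₗ[R] R[X] :=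
  lsum fun j => LinearMap.toSpanSingleton R R[X] (ascPochhammer R j)

theorem toAscPochhammer_monomial (j : ℕ) (a : R) :
    toAscPochhammer (monomial j a) = a • ascPochhammer R j := by
  simp [toAscPochhammer, lsum_apply]

theorem toAscPochhammer_X_mul (p : R[X]) :
    toAscPochhammer (X * p) = X * (toAscPochhammer p).comp (X + 1) := by
  induction p using Polynomial.induction_on' with
  | add p q hp hq => rw [mul_add, map_add, map_add, hp, hq, add_comp, mul_add]
  | monomial j a =>
    rw [X_mul_monomial, toAscPochhammer_monomial, toAscPochhammer_monomial,
      ascPochhammer_succ_left, smul_comp, mul_smul_comm]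

theorem toAscPochhammer_apply (p : R[X]) :
    toAscPochhammer p = ∑ j ∈ p.support, p.coeff j • ascPochhammer R j := by
  simp [toAscPochhammer, lsum_apply, Polynomial.sum_def]

variable [NoZeroDivisors R]

theorem natDegree_toAscPochhammer_le (p : R[X]) :
    (toAscPochhammer p).natDegree ≤ p.natDegree := by
  nontriviality R
  rw [toAscPochhammer_apply]
  refine natDegree_sum_le_of_forall_le _ _ fun j hj => ?_
  exact (natDegree_smul_le _ _).trans
    ((ascPochhammer_natDegree R j).trans_le (le_natDegree_of_mem_supp j hj))

theorem coeff_toAscPochhammer_natDegree (p : R[X]) :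
    (toAscPochhammer p).coeff p.natDegree = p.leadingCoeff := by
  nontriviality R
  rw [toAscPochhammer_apply, finsetSum_coeff, sum_eq_single p.natDegree]
  · have h1 : (ascPochhammer R p.natDegree).coeff p.natDegree = 1 := by
      simpa [ascPochhammer_natDegree] using (monic_ascPochhammer R p.natDegree).coeff_natDegree
    rw [coeff_smul, h1, smul_eq_mul, mul_one, leadingCoeff]
  · intro j hj hne
    rw [coeff_smul, coeff_eq_zero_of_natDegree_lt (p := ascPochhammer R j), smul_zero]
    rw [ascPochhammer_natDegree]
    exact lt_of_le_of_ne (le_natDegree_of_mem_supp j hj) hne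
  · intro h
    rw [notMem_support_iff.mp h, zero_smul, coeff_zero]

theorem natDegree_toAscPochhammer (p : R[X]) :
    (toAscPochhammer p).natDegree = p.natDegree := by
  rcases eq_or_ne p 0 with rfl | hp
  · simp
  refine natDegree_eq_of_le_of_coeff_ne_zero (natDegree_toAscPochhammer_le p) ?_
  rwa [coeff_toAscPochhammer_natDegree, leadingCoeff_ne_zero]

theorem Monic.toAscPochhammer {p : R[X]} (hp : p.Monic) : (toAscPochhammer p).Monic := by
  have h := coeff_toAscPochhammer_natDegree p
  rw [← natDegree_toAscPochhammer] at h
  exact h.trans hp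

end AscPochhammerTransform

theorem toAscPochhammer_injective {R : Type*} [CommRing R] [NoZeroDivisors R] :
    Function.Injective (toAscPochhammer : R[X] → R[X]) := by
  refine (injective_iff_map_eq_zero _).mpr fun p hp => ?_
  rw [← leadingCoeff_eq_zero, ← coeff_toAscPochhammer_natDegree, hp, coeff_zero]

end Polynomial

namespace Real

open Set

theorem Gamma_add_nat_eq_mul_eval_ascPochhammer {s : ℝ} (hs : 0 < s) (n : ℕ) :
    Gamma (s + n) = Gamma s * (ascPochhammer ℝ n).eval s := by
  induction n with
  | zero => simp
  | succ n ih =>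
    rw [Nat.cast_succ, ← add_assoc, Gamma_add_one (by positivity), ih, ascPochhammer_succ_right]
    simp only [eval_mul, eval_add, eval_X, eval_natCast]
    ring

theorem rpow_mul_exp_neg_mul_pow_eq {x : ℝ} (hx : 0 < x) (γ : ℝ) (j : ℕ) :
    x ^ γ * exp (-x) * x ^ j = exp (-x) * x ^ (γ + j + 1 - 1) := by
  rw [add_sub_cancel_right, rpow_add hx, rpow_natCast]
  ring

theorem integrableOn_rpow_mul_exp_neg_mul_pow {γ : ℝ} (hγ : -1 < γ) (j : ℕ) :
    IntegrableOn (fun x => x ^ γ * exp (-x) * x ^ j) (Ioi 0) :=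
  (GammaIntegral_convergent (by linarith [(j.cast_nonneg : (0 : ℝ) ≤ j)])).congr_fun
    (fun _ hx => (rpow_mul_exp_neg_mul_pow_eq hx γ j).symm) measurableSet_Ioi

theorem integral_rpow_mul_exp_neg_mul_pow {γ : ℝ} (hγ : -1 < γ) (j : ℕ) :
    ∫ x in Ioi 0, x ^ γ * exp (-x) * x ^ j = Gamma (γ + j + 1) := by
  rw [Gamma_eq_integral (by linarith [(j.cast_nonneg : (0 : ℝ) ≤ j)])]
  exact setIntegral_congr_fun measurableSet_Ioi fun _ hx => rpow_mul_exp_neg_mul_pow_eq hx γ j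

theorem integrableOn_eval_mul_rpow_mul_exp_neg_mul_pow {γ : ℝ} (hγ : -1 < γ) (p : ℝ[X])
    (k : ℕ) :
    IntegrableOn (fun x => p.eval x * (x ^ γ * exp (-x)) * x ^ k) (Ioi 0) := by
  induction p using Polynomial.induction_on' with
  | add p q hp hq =>
    exact (hp.add hq).congr_fun (fun x _ => by simp only [Pi.add_apply, eval_add]; ring)
      measurableSet_Ioi
  | monomial j a =>
    refine IntegrableOn.congr_fun
      ((integrableOn_rpow_mul_exp_neg_mul_pow hγ (k + j)).const_mul a) (fun x _ => ?_)
      measurableSet_Ioi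
    simp only [eval_monomial, pow_add]
    ring

theorem integral_eval_mul_rpow_mul_exp_neg_mul_pow {γ : ℝ} (hγ : -1 < γ) (p : ℝ[X])
    (k : ℕ) :
    ∫ x in Ioi 0, p.eval x * (x ^ γ * exp (-x)) * x ^ k =
      Gamma (γ + k + 1) * (toAscPochhammer p).eval (γ + k + 1) := by
  induction p using Polynomial.induction_on' with
  | add p q hp hq =>
    simp only [eval_add, add_mul, map_add]
    rw [integral_add (integrableOn_eval_mul_rpow_mul_exp_neg_mul_pow hγ p k)
      (integrableOn_eval_mul_rpow_mul_exp_neg_mul_pow hγ q k), hp, hq]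
    ring
  | monomial j a =>
    have h : ∀ x : ℝ, (monomial j a).eval x * (x ^ γ * exp (-x)) * x ^ k =
        a * (x ^ γ * exp (-x) * x ^ (k + j)) := fun x => by
      simp only [eval_monomial, pow_add]
      ring
    simp_rw [h]
    rw [integral_const_mul, integral_rpow_mul_exp_neg_mul_pow hγ, toAscPochhammer_monomial,
      eval_smul, smul_eq_mul, Nat.cast_add, ← add_assoc, add_right_comm _ (j : ℝ),
      Gamma_add_nat_eq_mul_eval_ascPochhammer (by linarith [(k.cast_nonneg : (0 : ℝ) ≤ k)])]
    ring

end Real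

namespace MultipleLaguerre

open Finset Real

noncomputable def nodePoly (γ : ℝ) (n : ℕ) : ℝ[X] :=
  ∏ i ∈ range n, (X - C (γ + i + 1))

theorem eval_nodePoly_succ (γ t : ℝ) (n : ℕ) :
    (nodePoly γ (n + 1)).eval t = (nodePoly γ n).eval t * (t - (γ + n + 1)) := by
  simp [nodePoly, eval_prod, prod_range_succ]

theorem eval_add_one_nodePoly_succ (γ t : ℝ) (n : ℕ) :
    (nodePoly γ (n + 1)).eval (t + 1) = (t - γ) * (nodePoly γ n).eval t := by
  simp only [nodePoly, prod_range_succ', eval_mul, eval_prod, eval_sub, eval_X, eval_C]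
  push_cast
  rw [mul_comm]
  congr 1
  · ring
  · exact prod_congr rfl fun i _ => by ring

theorem toAscPochhammer_eq_nodePoly_mul_nodePoly {α₁ α₂ : ℝ} (h1 : -1 < α₁) (h2 : -1 < α₂)
    (hZ : ∀ z : ℤ, α₁ - α₂ ≠ z) {n m : ℕ} {p : ℝ[X]} (hp : p.Monic)
    (hdeg : p.natDegree = n + m)
    (horth1 : ∀ k < n, ∫ x in Set.Ioi (0:ℝ), p.eval x * (x ^ α₁ * exp (-x)) * x ^ k = 0)
    (horth2 : ∀ k < m, ∫ x in Set.Ioi (0:ℝ), p.eval x * (x ^ α₂ * exp (-x)) * x ^ k = 0) :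
    toAscPochhammer p = nodePoly α₁ n * nodePoly α₂ m := by
  let v : ℕ ⊕ ℕ → ℝ := Sum.elim (fun i => α₁ + i + 1) (fun i => α₂ + i + 1)
  have hv : Function.Injective v := by
    refine Function.Injective.sumElim (fun i j h => ?_) (fun i j h => ?_) fun i j h => ?_
    · exact_mod_cast add_left_cancel (add_right_cancel h)
    · exact_mod_cast add_left_cancel (add_right_cancel h)
    · exact hZ (j - i) (by push_cast; linarith)
  have hroot {γ : ℝ} (hγ : -1 < γ) (k : ℕ)
      (h : ∫ x in Set.Ioi (0:ℝ), p.eval x * (x ^ γ * exp (-x)) * x ^ k = 0) :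
      (toAscPochhammer p).eval (γ + k + 1) = 0 := by
    rw [integral_eval_mul_rpow_mul_exp_neg_mul_pow hγ] at h
    exact (mul_eq_zero.mp h).resolve_left
      (Gamma_pos_of_pos (by linarith [(k.cast_nonneg : (0 : ℝ) ≤ k)])).ne'
  rw [hp.toAscPochhammer.eq_prod_X_sub_C_of_eval_eq_zero (s := (range n).disjSum (range m))
    hv.injOn (by rw [natDegree_toAscPochhammer, hdeg, card_disjSum, card_range, card_range]),
    prod_disjSum]
  · rfl
  rintro (k | k) hk
  · exact hroot h1 k (horth1 k (by simpa using hk))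
  · exact hroot h2 k (horth2 k (by simpa using hk))

section Recurrence

variable {α₁ α₂ : ℝ} {L : ℕ → ℕ → ℝ[X]}

theorem X_mul_diag (hL : ∀ n m, toAscPochhammer (L n m) = nodePoly α₁ n * nodePoly α₂ m)
    (n : ℕ) :
    X * L n n = L (n + 1) n + C (3 * (n : ℝ) + α₁ + 1) * L n n
      + C ((n : ℝ) * (3 * n + α₁ + α₂)) * L n (n - 1)
      + C ((n : ℝ) * (n + α₁) * (n + α₁ - α₂)) * L (n - 1) (n - 1) := by
  apply toAscPochhammer_injective
  simp only [← smul_eq_C_mul]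
  simp only [map_add, map_smul, toAscPochhammer_X_mul, hL]
  refine Polynomial.funext fun t => ?_
  simp only [eval_add, eval_mul, eval_smul, eval_comp, eval_X, eval_one, smul_eq_mul]
  rcases n with _ | n
  · simp [nodePoly]
  · rw [eval_add_one_nodePoly_succ, eval_add_one_nodePoly_succ]
    simp only [eval_nodePoly_succ, Nat.add_sub_cancel]
    push_cast
    ring

theorem X_mul_offdiag (hL : ∀ n m, toAscPochhammer (L n m) = nodePoly α₁ n * nodePoly α₂ m)
    (n : ℕ) :
    X * L (n + 1) n = L (n + 1) (n + 1) + C (3 * (n : ℝ) + α₂ + 2) * L (n + 1) n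
      + C (3 * (n : ℝ) ^ 2 + (α₁ + α₂ + 3) * n + α₁ + 1) * L n n
      + C ((n : ℝ) * (n + α₂) * (n + α₂ - α₁)) * L n (n - 1) := by
  apply toAscPochhammer_injective
  simp only [← smul_eq_C_mul]
  simp only [map_add, map_smul, toAscPochhammer_X_mul, hL]
  refine Polynomial.funext fun t => ?_
  simp only [eval_add, eval_mul, eval_smul, eval_comp, eval_X, eval_one, smul_eq_mul]
  rcases n with _ | n
  · simp [nodePoly]
    ring
  · rw [eval_add_one_nodePoly_succ, eval_add_one_nodePoly_succ]
    simp only [eval_nodePoly_succ, Nat.add_sub_cancel]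
    push_cast
    ring

end Recurrence

end MultipleLaguerre

theorem stmt_9_general (α₁ α₂ : ℝ) (h1 : -1 < α₁) (h2 : -1 < α₂)
    (hZ : ∀ z : ℤ, α₁ - α₂ ≠ z)
    (L : ℕ → ℕ → Polynomial ℝ)
    (hmonic : ∀ n m, (L n m).Monic)
    (hdeg : ∀ n m, (L n m).natDegree = n + m)
    (horth1 : ∀ n m, ∀ k < n,
      ∫ x in Set.Ioi (0:ℝ), (L n m).eval x * (x ^ α₁ * Real.exp (-x)) * x ^ k = 0)
    (horth2 : ∀ n m, ∀ k < m,
      ∫ x in Set.Ioi (0:ℝ), (L n m).eval x * (x ^ α₂ * Real.exp (-x)) * x ^ k = 0)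
    (P : ℤ → Polynomial ℝ)
    (hPeven : ∀ n : ℕ, P (2 * n) = L n n)
    (hPodd : ∀ n : ℕ, P (2 * n + 1) = L (n + 1) n) :
    (∀ n : ℕ, Polynomial.X * P (2 * n) = P (2 * n + 1)
        + Polynomial.C (3 * (n : ℝ) + α₁ + 1) * P (2 * n)
        + Polynomial.C ((n : ℝ) * (3 * n + α₁ + α₂)) * P (2 * n - 1)
        + Polynomial.C ((n : ℝ) * (n + α₁) * (n + α₁ - α₂)) * P (2 * n - 2)) ∧
    (∀ n : ℕ, Polynomial.X * P (2 * n + 1) = P (2 * n + 2)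
        + Polynomial.C (3 * (n : ℝ) + α₂ + 2) * P (2 * n + 1)
        + Polynomial.C (3 * (n : ℝ) ^ 2 + (α₁ + α₂ + 3) * n + α₁ + 1) * P (2 * n)
        + Polynomial.C ((n : ℝ) * (n + α₂) * (n + α₂ - α₁)) * P (2 * n - 1)) := by
  have hL (n m : ℕ) : toAscPochhammer (L n m) =
      MultipleLaguerre.nodePoly α₁ n * MultipleLaguerre.nodePoly α₂ m :=
    MultipleLaguerre.toAscPochhammer_eq_nodePoly_mul_nodePoly h1 h2 hZ (hmonic n m) (hdeg n m)
      (horth1 n m) (horth2 n m)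
  refine ⟨fun n => ?_, fun n => ?_⟩
  · rw [hPeven, hPodd]
    rcases n with _ | n
    -- at `n = 0` the unknown values `P (-1)` and `P (-2)` carry the coefficient `0`
    · simpa using MultipleLaguerre.X_mul_diag hL 0
    · rw [show 2 * ((n + 1 : ℕ) : ℤ) - 1 = 2 * n + 1 by push_cast; ring,
        show 2 * ((n + 1 : ℕ) : ℤ) - 2 = 2 * n by push_cast; ring, hPodd, hPeven]
      exact MultipleLaguerre.X_mul_diag hL (n + 1)
  · rw [show 2 * (n : ℤ) + 2 = 2 * ((n + 1 : ℕ) : ℤ) by push_cast; ring,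
      hPeven, hPodd, hPeven]
    rcases n with _ | n
    · simpa using MultipleLaguerre.X_mul_offdiag hL 0
    · rw [show 2 * ((n + 1 : ℕ) : ℤ) - 1 = 2 * n + 1 by push_cast; ring, hPodd]
      exact MultipleLaguerre.X_mul_offdiag hL (n + 1)

/-- **Recurrence relation for multiple Laguerre polynomials of the first kind** (r = 2),
along the stepline `P_{2n} = L_{n,n}`, `P_{2n+1} = L_{n+1,n}`:
`x P_N = P_{N+1} + b_N P_N + c_N P_{N-1} + d_N P_{N-2}` with the explicit coefficients
`b_{2n} = 3n+α₁+1`, `b_{2n+1} = 3n+α₂+2`, `c_{2n} = n(3n+α₁+α₂)`,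
`c_{2n+1} = 3n²+(α₁+α₂+3)n+α₁+1`, `d_{2n} = n(n+α₁)(n+α₁-α₂)`,
`d_{2n+1} = n(n+α₂)(n+α₂-α₁)`. -/
theorem stmt_9 (α₁ α₂ : ℝ) (h1 : -1 < α₁) (h2 : -1 < α₂)
    (hZ : ∀ z : ℤ, α₁ - α₂ ≠ z)
    (L : ℕ → ℕ → Polynomial ℝ)
    (hmonic : ∀ n m, (L n m).Monic)
    (hdeg : ∀ n m, (L n m).natDegree = n + m)
    (horth1 : ∀ n m, ∀ k < n,
      ∫ x in Set.Ioi (0:ℝ), (L n m).eval x * (x ^ α₁ * Real.exp (-x)) * x ^ k = 0)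
    (horth2 : ∀ n m, ∀ k < m,
      ∫ x in Set.Ioi (0:ℝ), (L n m).eval x * (x ^ α₂ * Real.exp (-x)) * x ^ k = 0)
    (P : ℤ → Polynomial ℝ)
    (hPneg : ∀ j : ℤ, j < 0 → P j = 0)
    (hPeven : ∀ n : ℕ, P (2 * n) = L n n)
    (hPodd : ∀ n : ℕ, P (2 * n + 1) = L (n + 1) n) :
    (∀ n : ℕ, Polynomial.X * P (2 * n) = P (2 * n + 1)
        + Polynomial.C (3 * (n : ℝ) + α₁ + 1) * P (2 * n)
        + Polynomial.C ((n : ℝ) * (3 * n + α₁ + α₂)) * P (2 * n - 1)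
        + Polynomial.C ((n : ℝ) * (n + α₁) * (n + α₁ - α₂)) * P (2 * n - 2)) ∧
    (∀ n : ℕ, Polynomial.X * P (2 * n + 1) = P (2 * n + 2)
        + Polynomial.C (3 * (n : ℝ) + α₂ + 2) * P (2 * n + 1)
        + Polynomial.C (3 * (n : ℝ) ^ 2 + (α₁ + α₂ + 3) * n + α₁ + 1) * P (2 * n)
        + Polynomial.C ((n : ℝ) * (n + α₂) * (n + α₂ - α₁)) * P (2 * n - 1)) :=
  stmt_9_general α₁ α₂ h1 h2 hZ L hmonic hdeg horth1 horth2 P hPeven hPodd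
end

section
/- Let α_1, α_2 > −1 and let n, m be nonnegative integers. Define F : (0,∞) → ℝ by F(x) = e^{x} x^{−α_1} (d^n/dx^n) [ x^{α_1−α_2+n} (d^m/dx^m) ( x^{α_2+m} e^{−x} ) ]. Then P(x) = (−1)^{n+m} F(x) coincides on (0,∞) with a monic polynomial of degree n + m that satisfies ∫_0^∞ P(x) x^{α_1} e^{−x} x^k dx = 0 for k = 0,…,n−1 and ∫_0^∞ P(x) x^{α_2} e^{−x} x^k dx = 0 for k = 0,…,m−1. -/
open MeasureTheory Polynomial Set Filter Topology Real

/-!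
Differentiating `x ^ β * e^{-x} * Q(x)` gives `x ^ (β - 1) * e^{-x} * (βQ + xQ' - xQ)(x)`,
so both iterated derivatives in the Rodrigues expression stay of the form
`x ^ s * e^{-x} * (polynomial)`; each step raises the degree by one and negates the leading
coefficient, so after the sign `(-1)^(n+m)` the polynomial is monic of degree `n + m`.

For orthogonality, integrating by parts against `x ^ s * e^{-x}` (boundary terms vanish as
`s > -1`) turns each differentiation step `βQ + xQ' - xQ` into multiplication by `β - s - 1`.
Against `x ^ (α₁ + k)` with `k < n` one of the outer `n` factors vanishes; against
`x ^ (α₂ + k)` with `k < m` one passes through the outer steps and one of the inner `m` factors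
vanishes.
-/

namespace MultipleLaguerre

/-- `rodriguesStep β Q = x^{1-β} e^x (d/dx) (x^β e^{-x} Q)`. -/
noncomputable def rodriguesStep (β : ℝ) (Q : ℝ[X]) : ℝ[X] :=
  C β * Q + X * derivative Q - X * Q

noncomputable def rodriguesIter (β : ℝ) : ℕ → ℝ[X] → ℝ[X]
  | 0, Q => Q
  | k + 1, Q => rodriguesStep (β - k) (rodriguesIter β k Q)

@[simp] lemma rodriguesIter_zero (β : ℝ) (Q : ℝ[X]) : rodriguesIter β 0 Q = Q := rfl

lemma rodriguesIter_succ (β : ℝ) (k : ℕ) (Q : ℝ[X]) :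
    rodriguesIter β (k + 1) Q = rodriguesStep (β - k) (rodriguesIter β k Q) := rfl

lemma rodriguesStep_add (a b : ℝ) (Q : ℝ[X]) :
    rodriguesStep (a + b) Q = C a * Q + rodriguesStep b Q := by
  simp only [rodriguesStep, C_add]; ring

lemma natDegree_C_mul_add_X_mul_derivative_le (β : ℝ) (Q : ℝ[X]) :
    (C β * Q + X * derivative Q).natDegree ≤ Q.natDegree := by
  refine natDegree_add_le_of_degree_le (natDegree_C_mul_le β Q) ?_
  refine natDegree_le_iff_coeff_eq_zero.mpr fun i hi => ?_
  cases i with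
  | zero => simp
  | succ j =>
    rw [coeff_X_mul, coeff_derivative, coeff_eq_zero_of_natDegree_lt (by exact_mod_cast hi),
      zero_mul]

lemma natDegree_C_mul_add_X_mul_derivative_lt {Q : ℝ[X]} (hQ : Q ≠ 0) (β : ℝ) :
    (C β * Q + X * derivative Q).natDegree < (X * Q).natDegree := by
  rw [natDegree_X_mul hQ]
  exact Nat.lt_succ_of_le (natDegree_C_mul_add_X_mul_derivative_le β Q)

lemma natDegree_rodriguesStep {Q : ℝ[X]} (hQ : Q ≠ 0) (β : ℝ) :
    (rodriguesStep β Q).natDegree = Q.natDegree + 1 := by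
  rw [rodriguesStep, natDegree_sub_eq_right_of_natDegree_lt
    (natDegree_C_mul_add_X_mul_derivative_lt hQ β), natDegree_X_mul hQ]

lemma leadingCoeff_rodriguesStep (β : ℝ) (Q : ℝ[X]) :
    (rodriguesStep β Q).leadingCoeff = -Q.leadingCoeff := by
  rcases eq_or_ne Q 0 with rfl | hQ
  · simp [rodriguesStep]
  rw [rodriguesStep, leadingCoeff_sub_of_degree_lt'
    (degree_lt_degree (natDegree_C_mul_add_X_mul_derivative_lt hQ β)), leadingCoeff_mul,
    leadingCoeff_X, one_mul]

lemma leadingCoeff_rodriguesIter (β : ℝ) (k : ℕ) (Q : ℝ[X]) :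
    (rodriguesIter β k Q).leadingCoeff = (-1) ^ k * Q.leadingCoeff := by
  induction k with
  | zero => simp
  | succ k ih => rw [rodriguesIter_succ, leadingCoeff_rodriguesStep, ih, pow_succ]; ring

lemma rodriguesIter_ne_zero {Q : ℝ[X]} (hQ : Q ≠ 0) (β : ℝ) (k : ℕ) :
    rodriguesIter β k Q ≠ 0 := by
  rw [← leadingCoeff_ne_zero, leadingCoeff_rodriguesIter]
  exact mul_ne_zero (pow_ne_zero _ (by norm_num)) (leadingCoeff_ne_zero.mpr hQ)

lemma natDegree_rodriguesIter {Q : ℝ[X]} (hQ : Q ≠ 0) (β : ℝ) (k : ℕ) :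
    (rodriguesIter β k Q).natDegree = Q.natDegree + k := by
  induction k with
  | zero => simp
  | succ k ih =>
    rw [rodriguesIter_succ, natDegree_rodriguesStep (rodriguesIter_ne_zero hQ β k), ih, add_assoc]

lemma hasDerivAt_rpow_mul_exp_neg_mul_eval (β : ℝ) (Q : ℝ[X]) {x : ℝ} (hx : 0 < x) :
    HasDerivAt (fun z => z ^ β * exp (-z) * Q.eval z)
      (x ^ (β - 1) * exp (-x) * (rodriguesStep β Q).eval x) x := by
  have hpow : HasDerivAt (fun z : ℝ => z ^ β) (β * x ^ (β - 1)) x :=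
    hasDerivAt_rpow_const (Or.inl hx.ne')
  have hexp : HasDerivAt (fun z : ℝ => exp (-z)) (-exp (-x)) x := by
    simpa using (hasDerivAt_neg x).exp
  refine ((hpow.mul hexp).mul (Q.hasDerivAt x)).congr_deriv ?_
  simp only [rodriguesStep, eval_sub, eval_add, eval_mul, eval_C, eval_X, Pi.mul_apply]
  rw [show x ^ β = x ^ (β - 1) * x by rw [← rpow_add_one hx.ne', sub_add_cancel]]
  ring

lemma eqOn_iteratedDeriv_rpow_mul_exp_neg_mul_eval (β : ℝ) (Q : ℝ[X]) (k : ℕ) :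
    EqOn (iteratedDeriv k fun z => z ^ β * exp (-z) * Q.eval z)
      (fun x => x ^ (β - k) * exp (-x) * (rodriguesIter β k Q).eval x) (Ioi 0) := by
  induction k with
  | zero => intro x _; simp
  | succ k ih =>
    intro x hx
    have hev : (iteratedDeriv k fun z => z ^ β * exp (-z) * Q.eval z) =ᶠ[𝓝 x]
        fun y => y ^ (β - k) * exp (-y) * (rodriguesIter β k Q).eval y :=
      eventually_of_mem (isOpen_Ioi.mem_nhds hx) ih
    rw [iteratedDeriv_succ, hev.deriv_eq,
      (hasDerivAt_rpow_mul_exp_neg_mul_eval (β - k) _ hx).deriv, rodriguesIter_succ,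
      Nat.cast_succ, sub_sub]

lemma rpow_mul_exp_neg_mul_eval_eq_sum {x : ℝ} (hx : 0 < x) (s : ℝ) (Q : ℝ[X]) :
    x ^ s * exp (-x) * Q.eval x =
      ∑ i ∈ Finset.range (Q.natDegree + 1), Q.coeff i * (x ^ (s + i) * exp (-x)) := by
  rw [eval_eq_sum_range, Finset.mul_sum]
  refine Finset.sum_congr rfl fun i _ => ?_
  rw [rpow_add_natCast hx.ne']
  ring

lemma integrableOn_rpow_mul_exp_neg_mul_eval {s : ℝ} (hs : -1 < s) (Q : ℝ[X]) :
    IntegrableOn (fun x => x ^ s * exp (-x) * Q.eval x) (Ioi 0) := by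
  have hterm (i : ℕ) :
      IntegrableOn (fun x : ℝ => Q.coeff i * (x ^ (s + i) * exp (-x))) (Ioi 0) := by
    have hi : (0 : ℝ) ≤ i := i.cast_nonneg
    have hgamma := GammaIntegral_convergent (s := s + i + 1) (by linarith)
    simp only [add_sub_cancel_right, mul_comm (exp _)] at hgamma
    exact hgamma.const_mul _
  have hsum : IntegrableOn
      (fun x => ∑ i ∈ Finset.range (Q.natDegree + 1), Q.coeff i * (x ^ (s + i) * exp (-x)))
      (Ioi 0) :=
    integrable_finsetSum _ fun i _ => hterm i
  exact hsum.congr_fun (fun x hx => (rpow_mul_exp_neg_mul_eval_eq_sum hx s Q).symm)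
    measurableSet_Ioi

lemma tendsto_rpow_mul_exp_neg_mul_eval_atTop (s : ℝ) (Q : ℝ[X]) :
    Tendsto (fun x => x ^ s * exp (-x) * Q.eval x) atTop (𝓝 0) := by
  have hterm (i : ℕ) :
      Tendsto (fun x : ℝ => Q.coeff i * (x ^ (s + i) * exp (-x))) atTop (𝓝 0) := by
    simpa using (tendsto_rpow_mul_exp_neg_mul_atTop_nhds_zero (s + i) 1 one_pos).const_mul
      (Q.coeff i)
  have hsum := tendsto_finsetSum (Finset.range (Q.natDegree + 1)) fun i _ => hterm i
  rw [Finset.sum_const_zero] at hsum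
  refine hsum.congr' ?_
  filter_upwards [eventually_gt_atTop 0] with x hx
  exact (rpow_mul_exp_neg_mul_eval_eq_sum hx s Q).symm

noncomputable def weightedIntegral (s : ℝ) (Q : ℝ[X]) : ℝ :=
  ∫ x in Ioi 0, x ^ s * exp (-x) * Q.eval x

lemma weightedIntegral_C_mul_add (s c : ℝ) {Q R : ℝ[X]}
    (hQ : IntegrableOn (fun x => x ^ s * exp (-x) * Q.eval x) (Ioi 0))
    (hR : IntegrableOn (fun x => x ^ s * exp (-x) * R.eval x) (Ioi 0)) :
    weightedIntegral s (C c * Q + R) = c * weightedIntegral s Q + weightedIntegral s R := by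
  simp only [weightedIntegral, eval_add, eval_mul, eval_C, mul_add]
  rw [← integral_const_mul, ← integral_add (hQ.const_mul c) hR]
  congr 1 with x
  ring

/-- The integrand is the derivative of `x ^ (s + 1) * exp (-x) * Q.eval x`, which vanishes at
both ends of `(0, ∞)`. -/
lemma weightedIntegral_rodriguesStep_add_one {s : ℝ} (hs : -1 < s) (Q : ℝ[X]) :
    weightedIntegral s (rodriguesStep (s + 1) Q) = 0 := by
  have hcont : ContinuousWithinAt (fun z => z ^ (s + 1) * exp (-z) * Q.eval z) (Ici 0) 0 :=
    (((continuousAt_rpow_const 0 (s + 1) (Or.inr (by linarith))).mul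
      (continuous_exp.comp continuous_neg).continuousAt).mul Q.continuousAt).continuousWithinAt
  have hderiv (x : ℝ) (hx : x ∈ Ioi 0) := hasDerivAt_rpow_mul_exp_neg_mul_eval (s + 1) Q hx
  simp only [add_sub_cancel_right] at hderiv
  rw [weightedIntegral, integral_Ioi_of_hasDerivAt_of_tendsto hcont hderiv
    (integrableOn_rpow_mul_exp_neg_mul_eval hs _) (tendsto_rpow_mul_exp_neg_mul_eval_atTop _ Q),
    zero_rpow (by linarith)]
  ring

lemma weightedIntegral_rodriguesStep {s : ℝ} (hs : -1 < s) (β : ℝ) (Q : ℝ[X]) :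
    weightedIntegral s (rodriguesStep β Q) = (β - s - 1) * weightedIntegral s Q := by
  rw [show β = (β - s - 1) + (s + 1) by ring, rodriguesStep_add,
    weightedIntegral_C_mul_add s _ (integrableOn_rpow_mul_exp_neg_mul_eval hs Q)
      (integrableOn_rpow_mul_exp_neg_mul_eval hs _),
    weightedIntegral_rodriguesStep_add_one hs, add_zero]
  ring

lemma weightedIntegral_rodriguesIter {s : ℝ} (hs : -1 < s) (β : ℝ) (N : ℕ) (Q : ℝ[X]) :
    weightedIntegral s (rodriguesIter β N Q) =
      (∏ j ∈ Finset.range N, (β - j - s - 1)) * weightedIntegral s Q := by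
  induction N with
  | zero => simp
  | succ N ih =>
    rw [rodriguesIter_succ, weightedIntegral_rodriguesStep hs, ih, Finset.prod_range_succ]
    ring

lemma weightedIntegral_rodriguesIter_eq_zero {α : ℝ} {k N : ℕ} (hα : -1 < α + k) (hk : k < N)
    (Q : ℝ[X]) : weightedIntegral (α + k) (rodriguesIter (α + N) N Q) = 0 := by
  obtain ⟨j, rfl⟩ : ∃ j, N = j + 1 + k := ⟨N - (k + 1), by omega⟩
  rw [weightedIntegral_rodriguesIter hα,
    Finset.prod_eq_zero (Finset.mem_range.mpr (by omega : j < j + 1 + k)) (by push_cast; ring),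
    zero_mul]

noncomputable def multipleLaguerre (α₁ α₂ : ℝ) (n m : ℕ) : ℝ[X] :=
  C ((-1) ^ (n + m)) * rodriguesIter (α₁ + n) n (rodriguesIter (α₂ + m) m 1)

variable (α₁ α₂ : ℝ) (n m : ℕ)

lemma monic_multipleLaguerre : (multipleLaguerre α₁ α₂ n m).Monic := by
  rw [Monic, multipleLaguerre, leadingCoeff_mul, leadingCoeff_C, leadingCoeff_rodriguesIter,
    leadingCoeff_rodriguesIter, leadingCoeff_one, mul_one, ← pow_add, ← pow_add]
  exact Even.neg_one_pow ⟨n + m, by ring⟩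

lemma natDegree_multipleLaguerre : (multipleLaguerre α₁ α₂ n m).natDegree = n + m := by
  rw [multipleLaguerre, natDegree_C_mul (pow_ne_zero _ (by norm_num)),
    natDegree_rodriguesIter (rodriguesIter_ne_zero one_ne_zero _ _),
    natDegree_rodriguesIter one_ne_zero, natDegree_one, zero_add, add_comm]

lemma eqOn_iteratedDeriv_rodrigues :
    EqOn (iteratedDeriv n fun y => y ^ (α₁ - α₂ + n) *
        iteratedDeriv m (fun z => z ^ (α₂ + m) * exp (-z)) y)
      (fun x => x ^ α₁ * exp (-x) *
        (rodriguesIter (α₁ + n) n (rodriguesIter (α₂ + m) m 1)).eval x) (Ioi 0) := by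
  have hinner := eqOn_iteratedDeriv_rpow_mul_exp_neg_mul_eval (α₂ + m) 1 m
  simp only [eval_one, mul_one, add_sub_cancel_right] at hinner
  have hprod : EqOn (fun y => y ^ (α₁ - α₂ + n) *
        iteratedDeriv m (fun z => z ^ (α₂ + m) * exp (-z)) y)
      (fun y => y ^ (α₁ + n) * exp (-y) * (rodriguesIter (α₂ + m) m 1).eval y) (Ioi 0) := by
    intro y hy
    simp only [hinner hy]
    rw [show α₁ + n = (α₁ - α₂ + n) + α₂ by ring, rpow_add hy (α₁ - α₂ + n) α₂]
    ring
  intro x hx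
  rw [hprod.iteratedDeriv_of_isOpen isOpen_Ioi n hx,
    eqOn_iteratedDeriv_rpow_mul_exp_neg_mul_eval _ _ n hx, add_sub_cancel_right]

lemma neg_one_pow_mul_rodrigues_eq_eval_multipleLaguerre {x : ℝ} (hx : 0 < x) :
    (-1) ^ (n + m) * (exp x * x ^ (-α₁) * iteratedDeriv n (fun y => y ^ (α₁ - α₂ + n) *
        iteratedDeriv m (fun z => z ^ (α₂ + m) * exp (-z)) y) x) =
      (multipleLaguerre α₁ α₂ n m).eval x := by
  rw [eqOn_iteratedDeriv_rodrigues α₁ α₂ n m hx]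
  simp only [multipleLaguerre, eval_mul, eval_C, rpow_neg hx.le, exp_neg]
  field_simp

lemma integral_multipleLaguerre_mul_pow (α : ℝ) (k : ℕ) :
    ∫ x in Ioi 0, (multipleLaguerre α₁ α₂ n m).eval x * (x ^ α * exp (-x)) * x ^ k =
      (-1) ^ (n + m) * weightedIntegral (α + k)
        (rodriguesIter (α₁ + n) n (rodriguesIter (α₂ + m) m 1)) := by
  rw [weightedIntegral, ← integral_const_mul]
  refine setIntegral_congr_fun measurableSet_Ioi fun x hx => ?_
  simp only [multipleLaguerre, eval_mul, eval_C, rpow_add_natCast (ne_of_gt hx)]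
  ring

lemma integral_multipleLaguerre_mul_pow_eq_zero_left (hα₁ : -1 < α₁) {k : ℕ} (hk : k < n) :
    ∫ x in Ioi 0, (multipleLaguerre α₁ α₂ n m).eval x * (x ^ α₁ * exp (-x)) * x ^ k
      = 0 := by
  rw [integral_multipleLaguerre_mul_pow, weightedIntegral_rodriguesIter_eq_zero
    (lt_add_of_lt_of_nonneg hα₁ k.cast_nonneg) hk, mul_zero]

lemma integral_multipleLaguerre_mul_pow_eq_zero_right (hα₂ : -1 < α₂) {k : ℕ} (hk : k < m) :
    ∫ x in Ioi 0, (multipleLaguerre α₁ α₂ n m).eval x * (x ^ α₂ * exp (-x)) * x ^ k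
      = 0 := by
  have hs : -1 < α₂ + k := lt_add_of_lt_of_nonneg hα₂ k.cast_nonneg
  rw [integral_multipleLaguerre_mul_pow, weightedIntegral_rodriguesIter hs,
    weightedIntegral_rodriguesIter_eq_zero hs hk, mul_zero, mul_zero]

end MultipleLaguerre

open MultipleLaguerre

/-- **Rodrigues formula for multiple Laguerre polynomials of the first kind** (r = 2):
`(-1)^{n+m} e^x x^{-α₁} D^n [x^{α₁-α₂+n} D^m (x^{α₂+m} e^{-x})]` coincides on `(0,∞)`
with the monic multiple Laguerre polynomial `L_{n,m}^{(α₁,α₂)}` of degree `n+m`. -/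
theorem stmt_10 (α₁ α₂ : ℝ) (h1 : -1 < α₁) (h2 : -1 < α₂)
    (n m : ℕ) (F : ℝ → ℝ)
    (hF : ∀ x ∈ Set.Ioi (0:ℝ),
      F x = Real.exp x * x ^ (-α₁) *
        iteratedDeriv n (fun y => y ^ (α₁ - α₂ + n) *
          iteratedDeriv m (fun z => z ^ (α₂ + m) * Real.exp (-z)) y) x) :
    ∃ P : Polynomial ℝ, P.Monic ∧ P.natDegree = n + m ∧
      (∀ x ∈ Set.Ioi (0:ℝ), (-1) ^ (n + m) * F x = P.eval x) ∧
      (∀ k < n,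
        ∫ x in Set.Ioi (0:ℝ), P.eval x * (x ^ α₁ * Real.exp (-x)) * x ^ k = 0) ∧
      (∀ k < m,
        ∫ x in Set.Ioi (0:ℝ), P.eval x * (x ^ α₂ * Real.exp (-x)) * x ^ k = 0) :=
  ⟨multipleLaguerre α₁ α₂ n m, monic_multipleLaguerre α₁ α₂ n m,
    natDegree_multipleLaguerre α₁ α₂ n m,
    fun x hx => by
      rw [hF x hx, neg_one_pow_mul_rodrigues_eq_eval_multipleLaguerre α₁ α₂ n m hx],
    fun _ hk => integral_multipleLaguerre_mul_pow_eq_zero_left α₁ α₂ n m h1 hk,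
    fun _ hk => integral_multipleLaguerre_mul_pow_eq_zero_right α₁ α₂ n m h2 hk⟩
end

section
/- Let c_1 ≠ c_2 be real numbers. For each pair of nonnegative integers (n, m), let H_{n,m} denote the monic polynomial of degree n + m satisfying ∫_{−∞}^{∞} H_{n,m}(x) e^{−x² + c_1 x} x^k dx = 0 for k = 0,…,n−1 and ∫_{−∞}^{∞} H_{n,m}(x) e^{−x² + c_2 x} x^k dx = 0 for k = 0,…,m−1, and set P_{2n} = H_{n,n}, P_{2n+1} = H_{n+1,n}, with the convention P_j = 0 for j < 0. Then for every N ≥ 0: x P_N(x) = P_{N+1}(x) + b_N P_N(x) + (N/2) P_{N−1}(x) + d_N P_{N−2}(x), where b_{2n} = c_1/2, b_{2n+1} = c_2/2, d_{2n} = n(c_1 − c_2)/4 and d_{2n+1} = n(c_2 − c_1)/4. -/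
open MeasureTheory Polynomial Real

namespace MHaux




noncomputable def Pm : ℕ → Polynomial ℝ
  | 0 => C (Real.sqrt π)
  | (k+1) => C (1/2 : ℝ) * (X * Pm k) + derivative (Pm k)

lemma Pm_derivative : ∀ k : ℕ, derivative (Pm k) = C ((k : ℝ)/2) * Pm (k-1)
  | 0 => by simp [Pm]
  | 1 => by simp [Pm, derivative_C_mul]
  | (k+2) => by
      have ih1 := Pm_derivative (k+1)
      have ih0 := Pm_derivative k
      rw [show (k+1:ℕ)-1 = k from rfl] at ih1
      show derivative (C (1/2 : ℝ) * (X * Pm (k+1)) + derivative (Pm (k+1)))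
        = C ((↑(k+2) : ℝ)/2) * Pm (k+1)
      rw [derivative_add, derivative_C_mul, derivative_mul, derivative_X, ih1,
        derivative_C_mul, ih0,
        show Pm (k+1) = C (1/2 : ℝ) * (X * Pm k) + derivative (Pm k) from rfl, ih0]
      apply Polynomial.funext; intro r
      simp only [eval_add, eval_mul, eval_C, eval_X, eval_one]
      push_cast
      ring

lemma Pm_succ (k : ℕ) : Pm (k+1) = C (1/2 : ℝ) * (X * Pm k + C (k : ℝ) * Pm (k-1)) := by
  show C (1/2 : ℝ) * (X * Pm k) + derivative (Pm k) = _
  rw [Pm_derivative]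
  apply Polynomial.funext; intro r
  simp only [eval_add, eval_mul, eval_C, eval_X]
  ring

lemma Pm_natDegree_le (k : ℕ) : (Pm k).natDegree ≤ k := by
  induction k with
  | zero => simp [Pm]
  | succ k ih =>
      show (C (1/2 : ℝ) * (X * Pm k) + derivative (Pm k)).natDegree ≤ k + 1
      refine (natDegree_add_le _ _).trans (max_le ?_ ?_)
      · refine (natDegree_mul_le).trans ?_
        simp only [natDegree_C, zero_add]
        refine (natDegree_mul_le).trans ?_
        have : (X : Polynomial ℝ).natDegree ≤ 1 := natDegree_X_le
        omega
      · exact (natDegree_derivative_le _).trans (by omega)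

lemma Pm_coeff_self (k : ℕ) : (Pm k).coeff k = Real.sqrt π / 2 ^ k := by
  induction k with
  | zero => simp [Pm]
  | succ k ih =>
      show (C (1/2 : ℝ) * (X * Pm k) + derivative (Pm k)).coeff (k+1) = _
      rw [coeff_add, coeff_C_mul, coeff_X_mul, coeff_derivative, ih,
        coeff_eq_zero_of_natDegree_lt (lt_of_le_of_lt (Pm_natDegree_le k) (by omega))]
      ring



noncomputable def psi (Q : Polynomial ℝ) : Polynomial ℝ := Q.sum fun k a => C a * Pm k

lemma psi_monomial (k : ℕ) (a : ℝ) : psi (monomial k a) = C a * Pm k :=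
  Polynomial.sum_monomial_index a _ (by simp)

lemma psi_add (p q : Polynomial ℝ) : psi (p + q) = psi p + psi q :=
  Polynomial.sum_add_index p q _ (by simp) (fun _ _ _ => by rw [C_add, add_mul])

lemma psi_C_mul (a : ℝ) (p : Polynomial ℝ) : psi (C a * p) = C a * psi p := by
  induction p using Polynomial.induction_on' with
  | add p q hp hq => rw [mul_add, psi_add, psi_add, hp, hq, mul_add]
  | monomial n b => rw [C_mul_monomial, psi_monomial, psi_monomial, C_mul, mul_assoc]

lemma psi_neg (p : Polynomial ℝ) : psi (-p) = - psi p := by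
  have : (-p) = C (-1) * p := by rw [map_neg, C_1, neg_one_mul]
  rw [this, psi_C_mul, map_neg, C_1, neg_one_mul]

lemma psi_sub (p q : Polynomial ℝ) : psi (p - q) = psi p - psi q := by
  rw [sub_eq_add_neg, psi_add, psi_neg, sub_eq_add_neg]

lemma psi_X_mul (p : Polynomial ℝ) :
    psi (X * p) = C (1/2 : ℝ) * (X * psi p) + derivative (psi p) := by
  induction p using Polynomial.induction_on' with
  | add p q hp hq =>
      rw [mul_add, psi_add, psi_add, hp, hq, derivative_add]
      ring
  | monomial n b =>
      rw [X_mul_monomial, psi_monomial, psi_monomial]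
      show C b * (C (1/2 : ℝ) * (X * Pm n) + derivative (Pm n)) = _
      rw [derivative_C_mul]
      ring

lemma psi_derivative (p : Polynomial ℝ) :
    derivative (psi p) = C (1/2 : ℝ) * psi (derivative p) := by
  induction p using Polynomial.induction_on' with
  | add p q hp hq => rw [psi_add, derivative_add, derivative_add, psi_add, hp, hq, mul_add]
  | monomial n b =>
      rw [psi_monomial, derivative_C_mul, Pm_derivative, derivative_monomial, psi_monomial]
      apply Polynomial.funext; intro r
      simp only [eval_mul, eval_C]
      ring

lemma psi_iterate_derivative (p : Polynomial ℝ) (j : ℕ) :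
    derivative^[j] (psi p) = C ((1/2 : ℝ)^j) * psi (derivative^[j] p) := by
  induction j with
  | zero => simp
  | succ j ih =>
      rw [Function.iterate_succ_apply', ih, derivative_C_mul, psi_derivative,
        Function.iterate_succ_apply', ← mul_assoc, ← C_mul, ← pow_succ]

lemma psi_coeff (p : Polynomial ℝ) (d : ℕ) (h : p.natDegree ≤ d) :
    (psi p).coeff d = p.coeff d * (Real.sqrt π / 2 ^ d) := by
  rw [psi, Polynomial.sum_def, finset_sum_coeff]
  rw [Finset.sum_eq_single d (fun n hn hne => ?_) (fun hd => ?_)]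
  · rw [coeff_C_mul, Pm_coeff_self]
  · have hnd : n < d := lt_of_le_of_ne (le_trans (le_natDegree_of_mem_supp n hn) h) hne
    rw [coeff_C_mul, coeff_eq_zero_of_natDegree_lt (lt_of_le_of_lt (Pm_natDegree_le n) hnd),
      mul_zero]
  · rw [notMem_support_iff.mp hd]
    simp


lemma pow_le_factorial_mul_exp (x : ℝ) (hx : 0 ≤ x) (n : ℕ) :
    x ^ n ≤ n.factorial * Real.exp x := by
  have h1 : x ^ n / n.factorial ≤ ∑ i ∈ Finset.range (n+1), x ^ i / i.factorial := by
    refine Finset.single_le_sum (f := fun i => x ^ i / (i.factorial : ℝ)) ?_ ?_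
    · intro i _; positivity
    · exact Finset.self_mem_range_succ n
  have h2 := Real.sum_le_exp_of_nonneg hx (n+1)
  have hf : (0:ℝ) < n.factorial := by positivity
  calc x ^ n = (x ^ n / n.factorial) * n.factorial := by field_simp
    _ ≤ Real.exp x * n.factorial := by
        apply mul_le_mul_of_nonneg_right (h1.trans h2) hf.le
    _ = n.factorial * Real.exp x := by ring

lemma integrable_pow_gauss (k : ℕ) (c : ℝ) :
    Integrable (fun x : ℝ => x ^ k * Real.exp (-x^2 + c*x)) := by
  have hb : Integrable fun x : ℝ =>
      (k.factorial * Real.exp ((|c|+1)^2/2)) * Real.exp (-(1/2) * x^2) :=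
    (integrable_exp_neg_mul_sq (by norm_num)).const_mul _
  refine hb.mono' ?_ (ae_of_all _ ?_)
  · exact ((continuous_pow k).mul
      (Real.continuous_exp.comp (by continuity))).aestronglyMeasurable
  · intro x
    rw [norm_mul, norm_pow, Real.norm_eq_abs, Real.norm_eq_abs, Real.abs_exp]
    have h1 : |x| ^ k ≤ k.factorial * Real.exp |x| :=
      pow_le_factorial_mul_exp |x| (abs_nonneg x) k
    have h2 : Real.exp (-x^2 + c*x) * Real.exp |x| ≤
        Real.exp ((|c|+1)^2/2) * Real.exp (-(1/2) * x^2) := by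
      rw [← Real.exp_add, ← Real.exp_add]
      apply Real.exp_le_exp.mpr
      have hcx : c * x ≤ |c| * |x| := by
        calc c * x ≤ |c * x| := le_abs_self _
          _ = |c| * |x| := abs_mul c x
      nlinarith [sq_nonneg (|x| - (|c|+1)), sq_abs x]
    have hpos : (0:ℝ) ≤ Real.exp (-x^2 + c*x) := (Real.exp_pos _).le
    calc |x| ^ k * Real.exp (-x^2 + c*x)
        ≤ (k.factorial * Real.exp |x|) * Real.exp (-x^2 + c*x) := by
          apply mul_le_mul_of_nonneg_right h1 hpos
      _ = k.factorial * (Real.exp (-x^2 + c*x) * Real.exp |x|) := by ring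
      _ ≤ k.factorial * (Real.exp ((|c|+1)^2/2) * Real.exp (-(1/2) * x^2)) := by
          apply mul_le_mul_of_nonneg_left h2 (by positivity)
      _ = k.factorial * Real.exp ((|c|+1)^2/2) * Real.exp (-(1/2) * x^2) := by ring

lemma integrable_poly_gauss (R : Polynomial ℝ) (c : ℝ) :
    Integrable (fun x : ℝ => R.eval x * Real.exp (-x^2 + c*x)) := by
  induction R using Polynomial.induction_on' with
  | add p q hp hq =>
      simp only [eval_add, add_mul]
      exact hp.add hq
  | monomial n b =>
      simp only [eval_monomial]
      have := (integrable_pow_gauss n c).const_mul b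
      simpa [mul_assoc] using this

noncomputable def J (c : ℝ) (R : Polynomial ℝ) : ℝ :=
  ∫ x : ℝ, R.eval x * Real.exp (-x^2 + c*x)

lemma J_add (c : ℝ) (p q : Polynomial ℝ) : J c (p + q) = J c p + J c q := by
  unfold J
  simp only [eval_add, add_mul]
  exact integral_add (integrable_poly_gauss p c) (integrable_poly_gauss q c)

lemma J_C_mul (c a : ℝ) (p : Polynomial ℝ) : J c (C a * p) = a * J c p := by
  unfold J
  simp only [eval_mul, eval_C, mul_assoc]
  exact integral_const_mul a _

lemma J_sub (c : ℝ) (p q : Polynomial ℝ) : J c (p - q) = J c p - J c q := by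
  have : p - q = p + C (-1) * q := by rw [map_neg, C_1, neg_one_mul, sub_eq_add_neg]
  rw [this, J_add, J_C_mul]; ring

lemma J_deriv_zero (c : ℝ) (R : Polynomial ℝ) :
    J c (derivative R + (C c - 2 * X) * R) = 0 := by
  unfold J
  apply integral_eq_zero_of_hasDerivAt_of_integrable
    (f := fun x : ℝ => R.eval x * Real.exp (-x^2 + c*x))
  · intro x
    have h1 : HasDerivAt (fun y : ℝ => -y^2 + c*y) (-(2*x) + c) x := by
      have hp : HasDerivAt (fun y : ℝ => y^2) (2*x) x := by
        simpa using hasDerivAt_pow 2 x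
      have hc : HasDerivAt (fun y : ℝ => c*y) c x := by
        simpa using (hasDerivAt_id x).const_mul c
      exact hp.neg.add hc
    have h2 : HasDerivAt (fun y : ℝ => Real.exp (-y^2 + c*y))
        (Real.exp (-x^2 + c*x) * (-(2*x) + c)) x := h1.exp
    have h3 := (R.hasDerivAt x).mul h2
    refine HasDerivAt.congr_deriv h3 ?_
    simp only [eval_add, eval_mul, eval_sub, eval_C, eval_X, eval_ofNat]
    ring
  · exact integrable_poly_gauss _ c
  · exact integrable_poly_gauss _ c

lemma J_one (c : ℝ) : J c 1 = Real.exp (c^2/4) * Real.sqrt π := by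
  unfold J
  have h1 : ∀ x : ℝ, (1 : Polynomial ℝ).eval x * Real.exp (-x^2 + c*x)
      = Real.exp (c^2/4) * Real.exp (-(x - c/2)^2) := by
    intro x
    rw [eval_one, one_mul, ← Real.exp_add]
    congr 1
    ring
  simp only [h1]
  rw [integral_const_mul]
  have h2 : ∫ x : ℝ, Real.exp (-(x - c/2)^2) = ∫ x : ℝ, Real.exp (-x^2) :=
    integral_sub_right_eq_self (fun y => Real.exp (-y^2)) (c/2)
  rw [h2]
  have h3 : ∫ x : ℝ, Real.exp (-x^2) = Real.sqrt π := by
    have := integral_gaussian 1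
    simpa using this
  rw [h3]


lemma psi_natDegree_le (p : Polynomial ℝ) : (psi p).natDegree ≤ p.natDegree := by
  rw [natDegree_le_iff_coeff_eq_zero]
  intro N hN
  rw [psi_coeff p N hN.le, coeff_eq_zero_of_natDegree_lt hN, zero_mul]

lemma sqrtpi_div_ne (d : ℕ) : Real.sqrt π / 2 ^ d ≠ 0 := by
  have : (0:ℝ) < Real.sqrt π := Real.sqrt_pos.mpr Real.pi_pos
  positivity

lemma psi_ne_zero {p : Polynomial ℝ} (hp : p ≠ 0) : psi p ≠ 0 := by
  intro h
  have h1 := psi_coeff p p.natDegree le_rfl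
  rw [h, coeff_zero] at h1
  exact (mul_ne_zero (leadingCoeff_ne_zero.mpr hp) (sqrtpi_div_ne _)) h1.symm

lemma psi_inj {p q : Polynomial ℝ} (h : psi p = psi q) : p = q := by
  by_contra hne
  exact psi_ne_zero (sub_ne_zero.mpr hne) (by rw [psi_sub, h, sub_self])

lemma J_pow_succ (c : ℝ) (k : ℕ) :
    J c (X ^ (k+1)) = (c * J c (X ^ k) + k * J c (X ^ (k-1))) / 2 := by
  have h0 := J_deriv_zero c (X ^ k)
  have hpoly : derivative (X ^ k : Polynomial ℝ) + (C c - 2 * X) * X ^ k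
      = C (k:ℝ) * X ^ (k-1) + (C c * X ^ k - C 2 * X ^ (k+1)) := by
    rw [derivative_X_pow, show (2 : Polynomial ℝ) = C 2 from (map_ofNat C 2).symm]
    ring
  rw [hpoly, J_add, J_sub, J_C_mul, J_C_mul, J_C_mul] at h0
  have h2 : (2:ℝ) * J c (X ^ (k+1)) = c * J c (X ^ k) + k * J c (X ^ (k-1)) := by
    linarith
  linarith

lemma J_pow_eq (c : ℝ) : ∀ k : ℕ, J c (X ^ k) = Real.exp (c^2/4) * (Pm k).eval c
  | 0 => by
      rw [pow_zero, J_one]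
      simp [Pm]
  | 1 => by
      have h := J_pow_succ c 0
      rw [pow_zero, J_one] at h
      rw [h, Pm_succ 0]
      simp [Pm]
      ring
  | (k+2) => by
      have i1 := J_pow_eq c (k+1)
      have i0 := J_pow_eq c k
      have h := J_pow_succ c (k+1)
      rw [show (k+1:ℕ)-1 = k from rfl] at h
      rw [h, i1, i0, Pm_succ (k+1), show (k+1:ℕ)-1 = k from rfl]
      simp only [eval_mul, eval_add, eval_C, eval_X]
      push_cast
      ring

lemma J_eq_psi (c : ℝ) (R : Polynomial ℝ) :
    J c R = Real.exp (c^2/4) * (psi R).eval c := by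
  induction R using Polynomial.induction_on' with
  | add p q hp hq => rw [J_add, psi_add, eval_add, hp, hq]; ring
  | monomial n b =>
      rw [← C_mul_X_pow_eq_monomial, J_C_mul, psi_C_mul, J_pow_eq,
        show psi (X ^ n) = Pm n by
          rw [← one_mul (X ^ n : Polynomial ℝ), ← C_1, C_mul_X_pow_eq_monomial,
            psi_monomial, C_1, one_mul]]
      rw [eval_mul, eval_C]
      ring


lemma orth_iterate (c : ℝ) (Hp : Polynomial ℝ) (n : ℕ)
    (horth : ∀ k, k < n → J c (X ^ k * Hp) = 0) :
    ∀ j k, j + k < n → J c (X ^ k * derivative^[j] Hp) = 0 := by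
  intro j
  induction j with
  | zero => intro k hk; simpa using horth k (by omega)
  | succ j ih =>
      intro k hk
      set S := derivative^[j] Hp with hS
      have hDS : derivative^[j+1] Hp = derivative S := by
        rw [hS, Function.iterate_succ_apply']
      have hd : derivative (X ^ k * S) = C (k:ℝ) * X ^ (k-1) * S + X ^ k * derivative S := by
        rw [derivative_mul, derivative_X_pow]
      set A := derivative (X ^ k * S) + (C c - 2 * X) * (X ^ k * S) with hA
      have hEQ : X ^ k * derivative S
          = A - C (k:ℝ) * (X ^ (k-1) * S) - C c * (X ^ k * S) + C 2 * (X ^ (k+1) * S) := by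
        rw [hA, hd, show (2 : Polynomial ℝ) = C 2 from (map_ofNat C 2).symm]
        ring
      have hA0 : J c A = 0 := J_deriv_zero c (X ^ k * S)
      rw [hDS, hEQ, J_add, J_sub, J_sub, hA0, J_C_mul, J_C_mul, J_C_mul,
        ih (k-1) (by omega), ih k (by omega), ih (k+1) (by omega)]
      ring

lemma psi_root_dvd (c : ℝ) (Hp : Polynomial ℝ) (hne : Hp ≠ 0) (n : ℕ)
    (horth : ∀ k, k < n → J c (X ^ k * Hp) = 0) :
    (X - C c) ^ n ∣ psi Hp := by
  rcases n with _ | s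
  · simpa using one_dvd _
  have hiter := orth_iterate c Hp (s+1) horth
  have hroot : ∀ m ≤ s, (derivative^[m] (psi Hp)).IsRoot c := by
    intro m hm
    have h0 : Real.exp (c^2/4) * (psi (derivative^[m] Hp)).eval c = 0 := by
      rw [← J_eq_psi]
      simpa using hiter m 0 (by omega)
    have hev : (psi (derivative^[m] Hp)).eval c = 0 := by
      rcases mul_eq_zero.mp h0 with h | h
      · exact absurd h (Real.exp_ne_zero _)
      · exact h
    rw [psi_iterate_derivative]
    show eval c _ = 0
    rw [eval_mul, eval_C, hev, mul_zero]
  have hlt : s < (psi Hp).rootMultiplicity c :=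
    Polynomial.lt_rootMultiplicity_of_isRoot_iterate_derivative_of_mem_nonZeroDivisors'
      (psi_ne_zero hne) hroot
      (fun m _ hm0 => mem_nonZeroDivisors_of_ne_zero (Nat.cast_ne_zero.mpr hm0))
  exact dvd_trans (pow_dvd_pow _ hlt) ((psi Hp).pow_rootMultiplicity_dvd c)

lemma psi_eq_key (c₁ c₂ : ℝ) (hc : c₁ ≠ c₂) (Hp : Polynomial ℝ) (n m : ℕ)
    (hmon : Hp.Monic) (hdeg : Hp.natDegree = n + m)
    (h1 : ∀ k, k < n → J c₁ (X ^ k * Hp) = 0)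
    (h2 : ∀ k, k < m → J c₂ (X ^ k * Hp) = 0) :
    psi Hp = C (Real.sqrt π / 2 ^ (n+m)) * ((X - C c₁) ^ n * (X - C c₂) ^ m) := by
  have hne : Hp ≠ 0 := hmon.ne_zero
  have hd1 := psi_root_dvd c₁ Hp hne n h1
  have hd2 := psi_root_dvd c₂ Hp hne m h2
  have hcop : IsCoprime ((X - C c₁) ^ n) ((X - C c₂) ^ m) :=
    (Polynomial.isCoprime_X_sub_C_of_isUnit_sub
      (isUnit_iff_ne_zero.mpr (sub_ne_zero.mpr hc))).pow
  obtain ⟨u, hu⟩ := hcop.mul_dvd hd1 hd2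
  have hmonΦ : ((X - C c₁) ^ n * (X - C c₂) ^ m).Monic :=
    ((monic_X_sub_C c₁).pow n).mul ((monic_X_sub_C c₂).pow m)
  have hdegΦ : ((X - C c₁) ^ n * (X - C c₂) ^ m).natDegree = n + m := by
    rw [natDegree_mul (((monic_X_sub_C c₁).pow n).ne_zero) (((monic_X_sub_C c₂).pow m).ne_zero),
      natDegree_pow, natDegree_pow]
    simp [natDegree_X_sub_C]
  have hψne : psi Hp ≠ 0 := psi_ne_zero hne
  have hune : u ≠ 0 := by
    rintro rfl
    rw [mul_zero] at hu
    exact hψne hu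
  have hdegψ : (psi Hp).natDegree ≤ n + m := hdeg ▸ psi_natDegree_le Hp
  have hdu : u.natDegree = 0 := by
    have := natDegree_mul (hmonΦ.ne_zero) hune
    rw [← hu, hdegΦ] at this
    omega
  obtain ⟨a, ha⟩ := natDegree_eq_zero.mp hdu
  have hcoef : (psi Hp).coeff (n+m) = Real.sqrt π / 2 ^ (n+m) := by
    rw [psi_coeff Hp (n+m) hdeg.le, ← hdeg, hmon.coeff_natDegree, one_mul]
  have hcoef2 : (psi Hp).coeff (n+m) = a := by
    rw [hu, ← ha, coeff_mul_C, ← hdegΦ, hmonΦ.coeff_natDegree, one_mul]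
  have haval : a = Real.sqrt π / 2 ^ (n+m) := by rw [← hcoef2, hcoef]
  rw [hu, ← ha, mul_comm, haval]

end MHaux


open MHaux

/-- **Recurrence relation for multiple Hermite polynomials** (r = 2), along the stepline
`P_{2n} = H_{n,n}`, `P_{2n+1} = H_{n+1,n}`:
`x P_N = P_{N+1} + b_N P_N + (N/2) P_{N-1} + d_N P_{N-2}` with
`b_{2n} = c₁/2`, `b_{2n+1} = c₂/2`, `d_{2n} = n(c₁-c₂)/4`, `d_{2n+1} = n(c₂-c₁)/4`. -/
theorem stmt_12 (c₁ c₂ : ℝ) (hc : c₁ ≠ c₂)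
    (H : ℕ → ℕ → Polynomial ℝ)
    (hmonic : ∀ n m, (H n m).Monic)
    (hdeg : ∀ n m, (H n m).natDegree = n + m)
    (horth1 : ∀ n m, ∀ k < n,
      ∫ x : ℝ, (H n m).eval x * Real.exp (-x ^ 2 + c₁ * x) * x ^ k = 0)
    (horth2 : ∀ n m, ∀ k < m,
      ∫ x : ℝ, (H n m).eval x * Real.exp (-x ^ 2 + c₂ * x) * x ^ k = 0)
    (P : ℤ → Polynomial ℝ)
    (hPneg : ∀ j : ℤ, j < 0 → P j = 0)
    (hPeven : ∀ n : ℕ, P (2 * n) = H n n)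
    (hPodd : ∀ n : ℕ, P (2 * n + 1) = H (n + 1) n) :
    (∀ n : ℕ, Polynomial.X * P (2 * n) = P (2 * n + 1)
        + Polynomial.C (c₁ / 2) * P (2 * n)
        + Polynomial.C ((2 * (n : ℝ)) / 2) * P (2 * n - 1)
        + Polynomial.C ((n : ℝ) * (c₁ - c₂) / 4) * P (2 * n - 2)) ∧
    (∀ n : ℕ, Polynomial.X * P (2 * n + 1) = P (2 * n + 2)
        + Polynomial.C (c₂ / 2) * P (2 * n + 1)
        + Polynomial.C ((2 * (n : ℝ) + 1) / 2) * P (2 * n)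
        + Polynomial.C ((n : ℝ) * (c₂ - c₁) / 4) * P (2 * n - 1)) := by
  have hJ1 : ∀ n m k, k < n → J c₁ (X ^ k * H n m) = 0 := by
    intro n m k hk
    have heq : J c₁ (X ^ k * H n m)
        = ∫ x : ℝ, (H n m).eval x * Real.exp (-x ^ 2 + c₁ * x) * x ^ k := by
      unfold J
      congr 1
      funext x
      simp only [eval_mul, eval_pow, eval_X]
      ring
    rw [heq]
    exact horth1 n m k hk
  have hJ2 : ∀ n m k, k < m → J c₂ (X ^ k * H n m) = 0 := by
    intro n m k hk
    have heq : J c₂ (X ^ k * H n m)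
        = ∫ x : ℝ, (H n m).eval x * Real.exp (-x ^ 2 + c₂ * x) * x ^ k := by
      unfold J
      congr 1
      funext x
      simp only [eval_mul, eval_pow, eval_X]
      ring
    rw [heq]
    exact horth2 n m k hk
  have key : ∀ n m : ℕ, psi (H n m)
      = C (Real.sqrt π / 2 ^ (n+m)) * ((X - C c₁) ^ n * (X - C c₂) ^ m) :=
    fun n m => psi_eq_key c₁ c₂ hc (H n m) n m (hmonic n m) (hdeg n m)
      (hJ1 n m) (hJ2 n m)
  constructor
  · intro n
    rcases n with _ | k
    · rw [show ((2:ℤ) * ((0:ℕ):ℤ) - 1) = (-1 : ℤ) by norm_num,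
        show ((2:ℤ) * ((0:ℕ):ℤ) - 2) = (-2 : ℤ) by norm_num,
        hPneg (-1) (by norm_num), hPneg (-2) (by norm_num), hPeven 0, hPodd 0]
      apply psi_inj
      simp only [mul_zero, add_zero, psi_add, psi_C_mul, psi_X_mul, key]
      simp only [derivative_C_mul, derivative_mul, derivative_pow, derivative_X_sub_C,
        pow_zero, Nat.cast_zero]
      apply Polynomial.funext
      intro r
      simp only [eval_add, eval_mul, eval_sub, eval_pow, eval_C, eval_X, eval_one,
        eval_natCast, Nat.cast_zero, Nat.cast_one, Nat.cast_ofNat]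
      norm_num
      ring
    · rw [show ((2:ℤ) * (((k+1:ℕ)):ℤ) - 1) = 2 * (k:ℕ) + 1 by push_cast; ring,
        show ((2:ℤ) * (((k+1:ℕ)):ℤ) - 2) = 2 * (k:ℕ) by push_cast; ring,
        hPeven (k+1), hPodd k, hPeven k,
        show ((2:ℤ) * (((k+1:ℕ)):ℤ) + 1) = 2 * ((k+1:ℕ)) + 1 by push_cast; ring,
        hPodd (k+1)]
      apply psi_inj
      simp only [psi_add, psi_C_mul, psi_X_mul, key]
      simp only [derivative_C_mul, derivative_mul, derivative_pow, derivative_X_sub_C,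
        Nat.add_sub_cancel, mul_one]
      apply Polynomial.funext
      intro r
      simp only [eval_add, eval_mul, eval_sub, eval_pow, eval_C, eval_X, eval_one,
        eval_natCast, derivative_C, eval_zero]
      push_cast
      field_simp
      ring
  · intro n
    rcases n with _ | k
    · rw [show ((2:ℤ) * ((0:ℕ):ℤ) - 1) = (-1 : ℤ) by norm_num,
        hPneg (-1) (by norm_num), hPeven 0, hPodd 0,
        show ((2:ℤ) * ((0:ℕ):ℤ) + 2) = 2 * ((1:ℕ):ℤ) by norm_num, hPeven 1]
      apply psi_inj
      simp only [mul_zero, add_zero, psi_add, psi_C_mul, psi_X_mul, key]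
      simp only [derivative_C_mul, derivative_mul, derivative_pow, derivative_X_sub_C,
        pow_zero, Nat.cast_zero]
      apply Polynomial.funext
      intro r
      simp only [eval_add, eval_mul, eval_sub, eval_pow, eval_C, eval_X, eval_one,
        eval_natCast, Nat.cast_zero, Nat.cast_one, Nat.cast_ofNat]
      norm_num
      ring
    · rw [show ((2:ℤ) * (((k+1:ℕ)):ℤ) - 1) = 2 * (k:ℕ) + 1 by push_cast; ring,
        show ((2:ℤ) * (((k+1:ℕ)):ℤ) + 2) = 2 * ((k+2:ℕ):ℤ) by push_cast; ring,
        hPeven (k+2), hPodd k, hPeven (k+1), hPodd (k+1)]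
      apply psi_inj
      simp only [psi_add, psi_C_mul, psi_X_mul, key]
      simp only [derivative_C_mul, derivative_mul, derivative_pow, derivative_X_sub_C,
        Nat.add_sub_cancel, mul_one]
      apply Polynomial.funext
      intro r
      simp only [eval_add, eval_mul, eval_sub, eval_pow, eval_C, eval_X, eval_one,
        eval_natCast, derivative_C, eval_zero]
      push_cast
      field_simp
      ring
end

section
/- Let a < 0 and α, β, γ > −1, and let n be a nonnegative integer. There is a monic polynomial P of degree 2n satisfying ∫_a^0 P(x)(x−a)^{α}|x|^{β}(1−x)^{γ} x^k dx = 0 for k = 0,…,n−1 and ∫_0^1 P(x)(x−a)^{α} x^{β}(1−x)^{γ} x^k dx = 0 for k = 0,…,n−1, such that for all x ∈ (0,1): (d^n/dx^n) [ (x−a)^{α+n} x^{β+n} (1−x)^{γ+n} ] = (−1)^n (α+β+γ+2n+1)_n (x−a)^{α} x^{β} (1−x)^{γ} P(x), where (a)_n is the Pochhammer symbol. -/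
open MeasureTheory Polynomial
open Set Topology

/-!
Write `D^m [(x - a)^A x^B (1 - x)^G] = (x - a)^(A - m) x^(B - m) (1 - x)^(G - m) q_m(x)`.
Differentiating once more gives a first-order recursion for the polynomials `q_m`, from which
`deg q_m ≤ 2m` and the coefficient of `x^(2m)` are read off; for `A, B, G = α + n, β + n, γ + n`
the coefficient of `x^(2n)` in `q_n` is `(-1)^n (α + β + γ + 2n + 1)_n`, and `P` is `q_n` divided
by it. For `m < n` all exponents are positive, so `D^m` of the weight vanishes at `a`, `0` and `1`;
integrating by parts `k + 1 ≤ n` times therefore moves derivatives onto `x^k`, without boundary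
terms, until they kill it. On `(a, 0)` the same computation runs with `(-x)^B = |x|^B`.
-/

theorem iteratedDeriv_eq_of_hasDerivAt {𝕜 F : Type*} [NontriviallyNormedField 𝕜]
    [NormedAddCommGroup F] [NormedSpace 𝕜 F] {f : ℕ → 𝕜 → F} {U : Set 𝕜} (hU : IsOpen U)
    (hf : ∀ m, ∀ x ∈ U, HasDerivAt (f m) (f (m + 1) x) x) (m : ℕ) :
    ∀ x ∈ U, iteratedDeriv m (f 0) x = f m x := by
  induction m with
  | zero => simp
  | succ m ih =>
    intro x hx
    have hev : iteratedDeriv m (f 0) =ᶠ[𝓝 x] f m := Filter.eventually_of_mem (hU.mem_nhds hx) ih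
    rw [iteratedDeriv_succ, hev.deriv_eq, (hf m x hx).deriv]

theorem integral_pow_mul_deriv_eq {f f' : ℝ → ℝ} {c d : ℝ} (hcd : c ≤ d)
    (hf : ContinuousOn f (Icc c d)) (hc : f c = 0) (hd : f d = 0)
    (hderiv : ∀ x ∈ Ioo c d, HasDerivAt f (f' x) x) (hf' : IntervalIntegrable f' volume c d)
    (k : ℕ) :
    ∫ x in c..d, x ^ k * f' x = -(k * ∫ x in c..d, x ^ (k - 1) * f x) := by
  rw [intervalIntegral.integral_mul_deriv_eq_deriv_mul_of_hasDerivAt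
    (continuous_pow k).continuousOn (by rwa [uIcc_of_le hcd])
    (fun x _ => hasDerivAt_pow k x) (by rwa [min_eq_left hcd, max_eq_right hcd])
    ((continuous_const.mul (continuous_pow _)).intervalIntegrable _ _) hf',
    hc, hd, ← intervalIntegral.integral_const_mul]
  simp [mul_assoc]

theorem integral_pow_mul_eq_zero_of_hasDerivAt {f : ℕ → ℝ → ℝ} {c d : ℝ} (hcd : c ≤ d) {n : ℕ}
    (hcont : ∀ m < n, ContinuousOn (f m) (Icc c d))
    (hc : ∀ m < n, f m c = 0) (hd : ∀ m < n, f m d = 0)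
    (hderiv : ∀ m < n, ∀ x ∈ Ioo c d, HasDerivAt (f m) (f (m + 1) x) x)
    (hint : IntervalIntegrable (f n) volume c d) {k : ℕ} (hk : k < n) :
    ∫ x in c..d, x ^ k * f n x = 0 := by
  induction n generalizing k with
  | zero => omega
  | succ n ih =>
    have hint_n : IntervalIntegrable (f n) volume c d :=
      (hcont n n.lt_succ_self).intervalIntegrable_of_Icc hcd
    rw [integral_pow_mul_deriv_eq hcd (hcont n n.lt_succ_self) (hc n n.lt_succ_self)
      (hd n n.lt_succ_self) (hderiv n n.lt_succ_self) hint k]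
    rcases k with _ | k
    · simp
    · rw [ih (fun m hm => hcont m (by omega)) (fun m hm => hc m (by omega))
        (fun m hm => hd m (by omega)) (fun m hm => hderiv m (by omega)) hint_n (by omega)]
      simp

theorem intervalIntegrable_sub_rpow_mul_rpow_sub_mul {c d p q : ℝ} {h : ℝ → ℝ} (hcd : c < d)
    (hp : -1 < p) (hq : -1 < q) (hh : ContinuousOn h (Icc c d)) :
    IntervalIntegrable (fun x => (x - c) ^ p * (d - x) ^ q * h x) volume c d := by
  obtain ⟨e, hce, hed⟩ := exists_between hcd
  refine IntervalIntegrable.trans (b := e) ?_ ?_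
  · have hleft : IntervalIntegrable (fun x => (x - c) ^ p) volume c e := by
      simpa using
        (intervalIntegral.intervalIntegrable_rpow' hp (a := 0) (b := e - c)).comp_sub_right c
    simp_rw [mul_assoc]
    refine hleft.mul_continuousOn (ContinuousOn.mul ?_ (hh.mono ?_))
    · exact ContinuousOn.rpow_const (f := fun x => d - x) (by fun_prop)
        fun x hx => Or.inl (by rw [uIcc_of_le hce.le] at hx; linarith [hx.2])
    · rw [uIcc_of_le hce.le]; exact Icc_subset_Icc le_rfl hed.le
  · have hright : IntervalIntegrable (fun x => (d - x) ^ q) volume e d := by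
      simpa using
        ((intervalIntegral.intervalIntegrable_rpow' hq (a := 0) (b := d - e)).comp_sub_left d).symm
    rw [show (fun x => (x - c) ^ p * (d - x) ^ q * h x) = fun x => (d - x) ^ q * ((x - c) ^ p * h x)
      by ext; ring]
    refine hright.mul_continuousOn (ContinuousOn.mul ?_ (hh.mono ?_))
    · exact ContinuousOn.rpow_const (f := fun x => x - c) (by fun_prop)
        fun x hx => Or.inl (by rw [uIcc_of_le hed.le] at hx; linarith [hx.1])
    · rw [uIcc_of_le hed.le]; exact Icc_subset_Icc hce.le le_rfl

theorem hasDerivAt_rpow_sub_natCast {f : ℝ → ℝ} {f' x p : ℝ} (hf : HasDerivAt f f' x)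
    (hx : f x ≠ 0) (m : ℕ) :
    HasDerivAt (fun y => f y ^ (p - m))
      ((p - m) * f' * f x ^ (p - (m + 1 : ℕ))) x := by
  convert hf.rpow_const (p := p - m) (Or.inl hx) using 1
  push_cast; ring_nf

theorem rpow_sub_natCast_eq_mul {y p : ℝ} (hy : y ≠ 0) (m : ℕ) :
    y ^ (p - m) = y ^ (p - (m + 1 : ℕ)) * y := by
  rw [← Real.rpow_add_one hy]; push_cast; ring_nf

theorem sub_natCast_pos {A : ℝ} {m n : ℕ} (hA : (n : ℝ) - 1 < A) (hm : m < n) : 0 < A - m := by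
  have : (m : ℝ) + 1 ≤ n := by exact_mod_cast hm
  linarith

namespace JacobiAngelesco

variable (a A B G : ℝ)

noncomputable def endpointPoly : ℝ[X] := (X - C a) * X * (1 - X)

noncomputable def rodriguesStep (k : ℕ) : ℝ[X] :=
  C (A - k) * (X * (1 - X)) + C (B - k) * ((X - C a) * (1 - X)) - C (G - k) * ((X - C a) * X)

/-- Dividing `D [(x - a)^(A - k) x^(B - k) (1 - x)^(G - k) q(x)]` by
`(x - a)^(A - k - 1) x^(B - k - 1) (1 - x)^(G - k - 1)` leaves
`rodriguesStep k * q + endpointPoly * q'`. -/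
noncomputable def rodriguesPoly : ℕ → ℝ[X]
  | 0 => 1
  | k + 1 =>
    rodriguesStep a A B G k * rodriguesPoly k + endpointPoly a * derivative (rodriguesPoly k)

theorem natDegree_rodriguesStep_le (k : ℕ) : (rodriguesStep a A B G k).natDegree ≤ 2 := by
  unfold rodriguesStep
  compute_degree

theorem coeff_rodriguesStep_two (k : ℕ) :
    (rodriguesStep a A B G k).coeff 2 = -(A + B + G - 3 * k) := by
  simp only [rodriguesStep, map_sub, map_natCast, mul_sub, mul_one, sub_mul, coeff_sub, coeff_add,
    coeff_mul_X, coeff_C_succ, coeff_natCast_ite, one_ne_zero, ↓reduceIte, CharP.cast_eq_zero,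
    sub_self, coeff_C_mul, coeff_X, coeff_natCast_mul, zero_sub, neg_sub, coeff_mul_C, zero_mul,
    OfNat.ofNat_ne_zero, mul_zero, sub_zero]
  ring

theorem natDegree_endpointPoly_mul_derivative_le {p : ℝ[X]} {N : ℕ} (hp : p.natDegree ≤ N) :
    (endpointPoly a * derivative p).natDegree ≤ N + 2 := by
  rcases eq_or_ne p.natDegree 0 with h0 | h0
  · simp [derivative_of_natDegree_zero h0]
  · have hcubic : (endpointPoly a).natDegree ≤ 3 := by unfold endpointPoly; compute_degree
    have := natDegree_derivative_lt h0
    exact natDegree_mul_le.trans (by omega)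

theorem coeff_endpointPoly_mul_derivative {p : ℝ[X]} {k : ℕ} (hp : p.natDegree ≤ 2 * k) :
    (endpointPoly a * derivative p).coeff (2 * k + 2) = -(2 * k) * p.coeff (2 * k) := by
  rcases k with _ | j
  · simp [derivative_of_natDegree_zero (Nat.le_zero.mp hp)]
  · have hcubic : (endpointPoly a).coeff 3 = -1 := by
      simp [endpointPoly, sub_mul, mul_sub, coeff_X]
    rw [show 2 * (j + 1) + 2 = 3 + (2 * j + 1) by ring,
      coeff_mul_add_eq_of_natDegree_le (by unfold endpointPoly; compute_degree)
        ((natDegree_derivative_le p).trans (by omega)), hcubic, coeff_derivative,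
      show 2 * j + 1 + 1 = 2 * (j + 1) by ring]
    push_cast
    ring

theorem natDegree_rodriguesPoly_le (k : ℕ) : (rodriguesPoly a A B G k).natDegree ≤ 2 * k := by
  induction k with
  | zero => simp [rodriguesPoly]
  | succ k ih =>
    have := natDegree_rodriguesStep_le a A B G k
    exact natDegree_add_le_of_degree_le (natDegree_mul_le.trans (by omega))
      (natDegree_endpointPoly_mul_derivative_le a ih)

theorem coeff_rodriguesPoly (k : ℕ) :
    (rodriguesPoly a A B G k).coeff (2 * k) = ∏ m ∈ Finset.range k, -(A + B + G - m) := by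
  induction k with
  | zero => simp [rodriguesPoly]
  | succ k ih =>
    have hdeg := natDegree_rodriguesPoly_le a A B G k
    rw [rodriguesPoly, Finset.prod_range_succ, ← ih, coeff_add,
      show 2 * (k + 1) = 2 + 2 * k by ring,
      coeff_mul_add_eq_of_natDegree_le (natDegree_rodriguesStep_le a A B G k) hdeg,
      coeff_rodriguesStep_two, add_comm 2, coeff_endpointPoly_mul_derivative a hdeg]
    ring

/-- `s = 1` gives the Rodrigues weight on `(0, 1)`, and `s = -1` the one on `(a, 0)`, where
`(s x)^B = |x|^B`; by `hasDerivAt_rodriguesDeriv` this is `s^(-m)` times the `m`-th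
derivative of the case `m = 0`. -/
noncomputable def rodriguesDeriv (s : ℝ) (m : ℕ) (x : ℝ) : ℝ :=
  (x - a) ^ (A - m) * (s * x) ^ (B - m) * (1 - x) ^ (G - m) * (rodriguesPoly a A B G m).eval x

variable {a A B G}

theorem hasDerivAt_rodriguesDeriv {s x : ℝ} (m : ℕ) (hxa : x - a ≠ 0) (hsx : s * x ≠ 0)
    (hx1 : 1 - x ≠ 0) :
    HasDerivAt (rodriguesDeriv a A B G s m) (s * rodriguesDeriv a A B G s (m + 1) x) x := by
  have h1 := hasDerivAt_rpow_sub_natCast (p := A) ((hasDerivAt_id x).sub_const a) hxa m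
  have h2 := hasDerivAt_rpow_sub_natCast (p := B) ((hasDerivAt_id x).const_mul s) hsx m
  have h3 := hasDerivAt_rpow_sub_natCast (p := G) ((hasDerivAt_id x).const_sub 1) hx1 m
  refine (((h1.mul h2).mul h3).mul ((rodriguesPoly a A B G m).hasDerivAt x)).congr_deriv ?_
  simp only [rodriguesDeriv, rodriguesPoly, rodriguesStep, endpointPoly, id, Pi.mul_apply,
    rpow_sub_natCast_eq_mul hxa m, rpow_sub_natCast_eq_mul hsx m, rpow_sub_natCast_eq_mul hx1 m,
    eval_add, eval_sub, eval_mul, eval_C, eval_X, eval_one]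
  ring

theorem continuous_rodriguesDeriv (s : ℝ) {m : ℕ} (hA : 0 ≤ A - m) (hB : 0 ≤ B - m)
    (hG : 0 ≤ G - m) : Continuous (rodriguesDeriv a A B G s m) :=
  ((((continuous_id.sub continuous_const).rpow_const fun _ => Or.inr hA).mul
    ((continuous_const.mul continuous_id).rpow_const fun _ => Or.inr hB)).mul
    ((continuous_const.sub continuous_id).rpow_const fun _ => Or.inr hG)).mul
    (rodriguesPoly a A B G m).continuous

theorem integral_pow_mul_rodriguesDeriv_eq_zero {s c d : ℝ} {n k : ℕ} (hs : s ≠ 0) (hcd : c ≤ d)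
    (hA : (n : ℝ) - 1 < A) (hB : (n : ℝ) - 1 < B) (hG : (n : ℝ) - 1 < G)
    (hbases : ∀ x ∈ Ioo c d, x - a ≠ 0 ∧ s * x ≠ 0 ∧ 1 - x ≠ 0)
    (hc : ∀ m < n, rodriguesDeriv a A B G s m c = 0)
    (hd : ∀ m < n, rodriguesDeriv a A B G s m d = 0)
    (hint : IntervalIntegrable (rodriguesDeriv a A B G s n) volume c d) (hk : k < n) :
    ∫ x in c..d, x ^ k * rodriguesDeriv a A B G s n x = 0 := by
  -- the factor `s ^ m` turns `D g_m = s g_{m+1}` into an exact chain of derivatives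
  have hchain := integral_pow_mul_eq_zero_of_hasDerivAt hcd
    (f := fun m x => s ^ m * rodriguesDeriv a A B G s m x)
    (fun m hm => (continuous_const.mul (continuous_rodriguesDeriv s
      (sub_natCast_pos hA hm).le (sub_natCast_pos hB hm).le
      (sub_natCast_pos hG hm).le)).continuousOn)
    (fun m hm => by simp [hc m hm]) (fun m hm => by simp [hd m hm])
    (fun m _ x hx => by
      obtain ⟨hxa, hsx, hx1⟩ := hbases x hx
      exact ((hasDerivAt_rodriguesDeriv m hxa hsx hx1).const_mul (s ^ m)).congr_deriv (by ring))
    (hint.const_mul _) hk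
  simp_rw [mul_left_comm _ (s ^ n), intervalIntegral.integral_const_mul] at hchain
  exact (mul_eq_zero.1 hchain).resolve_left (pow_ne_zero n hs)

theorem integral_Ioo_zero_one_pow_mul_rodriguesDeriv (ha : a < 0) {n k : ℕ}
    (hA : (n : ℝ) - 1 < A) (hB : (n : ℝ) - 1 < B) (hG : (n : ℝ) - 1 < G) (hk : k < n) :
    ∫ x in Ioo (0 : ℝ) 1, x ^ k * rodriguesDeriv a A B G 1 n x = 0 := by
  have hint : IntervalIntegrable (rodriguesDeriv a A B G 1 n) volume 0 1 := by
    have hh : ContinuousOn (fun x => (x - a) ^ (A - n) * (rodriguesPoly a A B G n).eval x)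
        (Icc 0 1) :=
      (ContinuousOn.rpow_const (f := fun x => x - a) (by fun_prop)
        fun x hx => Or.inl (sub_ne_zero.2 (ha.trans_le hx.1).ne')).mul
        (rodriguesPoly a A B G n).continuous.continuousOn
    convert intervalIntegrable_sub_rpow_mul_rpow_sub_mul (p := B - n) (q := G - n) zero_lt_one
      (by linarith) (by linarith) hh using 1
    ext x
    simp only [rodriguesDeriv, sub_zero, one_mul]
    ring
  rw [← integral_Ioc_eq_integral_Ioo, ← intervalIntegral.integral_of_le zero_le_one]
  exact integral_pow_mul_rodriguesDeriv_eq_zero one_ne_zero zero_le_one hA hB hG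
    (fun x hx => ⟨sub_ne_zero.2 (ha.trans hx.1).ne', by simpa using hx.1.ne',
      sub_ne_zero.2 hx.2.ne'⟩)
    (fun m hm => by simp [rodriguesDeriv, Real.zero_rpow (sub_natCast_pos hB hm).ne'])
    (fun m hm => by simp [rodriguesDeriv, Real.zero_rpow (sub_natCast_pos hG hm).ne'])
    hint hk

theorem integral_Ioo_neg_pow_mul_rodriguesDeriv (ha : a < 0) {n k : ℕ}
    (hA : (n : ℝ) - 1 < A) (hB : (n : ℝ) - 1 < B) (hG : (n : ℝ) - 1 < G) (hk : k < n) :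
    ∫ x in Ioo a 0, x ^ k * rodriguesDeriv a A B G (-1) n x = 0 := by
  have hint : IntervalIntegrable (rodriguesDeriv a A B G (-1) n) volume a 0 := by
    have hh : ContinuousOn (fun x => (1 - x) ^ (G - n) * (rodriguesPoly a A B G n).eval x)
        (Icc a 0) :=
      (ContinuousOn.rpow_const (f := fun x => 1 - x) (by fun_prop)
        fun x hx => Or.inl (sub_ne_zero.2 (hx.2.trans_lt zero_lt_one).ne')).mul
        (rodriguesPoly a A B G n).continuous.continuousOn
    convert intervalIntegrable_sub_rpow_mul_rpow_sub_mul (p := A - n) (q := B - n) ha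
      (by linarith) (by linarith) hh using 1
    ext x
    simp only [rodriguesDeriv, neg_one_mul, zero_sub]
    ring
  rw [← integral_Ioc_eq_integral_Ioo, ← intervalIntegral.integral_of_le ha.le]
  exact integral_pow_mul_rodriguesDeriv_eq_zero (by norm_num) ha.le hA hB hG
    (fun x hx => ⟨sub_ne_zero.2 hx.1.ne', by simpa using hx.2.ne,
      sub_ne_zero.2 (hx.2.trans zero_lt_one).ne'⟩)
    (fun m hm => by simp [rodriguesDeriv, Real.zero_rpow (sub_natCast_pos hA hm).ne'])
    (fun m hm => by simp [rodriguesDeriv, Real.zero_rpow (sub_natCast_pos hB hm).ne'])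
    hint hk

noncomputable def rodriguesConst (α β γ : ℝ) (n : ℕ) : ℝ :=
  (-1) ^ n * ∏ i ∈ Finset.range n, (α + β + γ + 2 * n + 1 + i)

variable {α β γ : ℝ}

theorem rodriguesConst_ne_zero (hα : -1 < α) (hβ : -1 < β) (hγ : -1 < γ) (n : ℕ) :
    rodriguesConst α β γ n ≠ 0 := by
  refine mul_ne_zero (pow_ne_zero _ (by norm_num)) (Finset.prod_ne_zero_iff.2 fun i hi => ?_)
  have hn : (i : ℝ) + 1 ≤ n := by exact_mod_cast Finset.mem_range.1 hi
  have hi : (0 : ℝ) ≤ i := i.cast_nonneg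
  linarith

theorem coeff_rodriguesPoly_diag (n : ℕ) :
    (rodriguesPoly a (α + n) (β + n) (γ + n) n).coeff (2 * n) = rodriguesConst α β γ n := by
  rw [coeff_rodriguesPoly, Finset.prod_neg, Finset.card_range, rodriguesConst,
    ← Finset.prod_range_reflect]
  refine congrArg _ (Finset.prod_congr rfl fun i hi => ?_)
  have hi : 1 + i ≤ n := by have := Finset.mem_range.1 hi; omega
  rw [Nat.sub_sub, Nat.cast_sub hi]
  push_cast
  ring

variable (a α β γ) in
/-- The diagonal Jacobi–Angelesco polynomial `P_{n,n}^{(α,β,γ)}(x; a)`. -/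
noncomputable def diagonal (n : ℕ) : ℝ[X] :=
  C (rodriguesConst α β γ n)⁻¹ * rodriguesPoly a (α + n) (β + n) (γ + n) n

theorem eval_diagonal (n : ℕ) (x : ℝ) :
    (diagonal a α β γ n).eval x
      = (rodriguesConst α β γ n)⁻¹ * (rodriguesPoly a (α + n) (β + n) (γ + n) n).eval x := by
  simp [diagonal]

theorem natDegree_diagonal (hα : -1 < α) (hβ : -1 < β) (hγ : -1 < γ) (n : ℕ) :
    (diagonal a α β γ n).natDegree = 2 * n := by
  rw [diagonal, natDegree_C_mul (inv_ne_zero (rodriguesConst_ne_zero hα hβ hγ n))]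
  exact natDegree_eq_of_le_of_coeff_ne_zero (natDegree_rodriguesPoly_le ..)
    ((coeff_rodriguesPoly_diag n).trans_ne (rodriguesConst_ne_zero hα hβ hγ n))

theorem monic_diagonal (hα : -1 < α) (hβ : -1 < β) (hγ : -1 < γ) (n : ℕ) :
    (diagonal a α β γ n).Monic := by
  rw [Monic, leadingCoeff, natDegree_diagonal hα hβ hγ, diagonal,
    coeff_C_mul, coeff_rodriguesPoly_diag, inv_mul_cancel₀ (rodriguesConst_ne_zero hα hβ hγ n)]

theorem integral_Ioo_neg_diagonal_mul_pow (ha : a < 0) (hα : -1 < α) (hβ : -1 < β)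
    (hγ : -1 < γ) {n k : ℕ} (hk : k < n) :
    ∫ x in Ioo a 0,
      (diagonal a α β γ n).eval x * ((x - a) ^ α * |x| ^ β * (1 - x) ^ γ) * x ^ k
      = 0 := by
  have h := integral_Ioo_neg_pow_mul_rodriguesDeriv ha (A := α + n) (B := β + n) (G := γ + n)
    (by linarith) (by linarith) (by linarith) hk
  calc _ = (rodriguesConst α β γ n)⁻¹
        * ∫ x in Ioo a 0, x ^ k * rodriguesDeriv a (α + n) (β + n) (γ + n) (-1) n x := by
        rw [← integral_const_mul]
        refine setIntegral_congr_fun measurableSet_Ioo fun x hx => ?_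
        simp only [eval_diagonal, rodriguesDeriv, add_sub_cancel_right,
          abs_of_neg hx.2, neg_one_mul]
        ring
    _ = 0 := by rw [h, mul_zero]

theorem integral_Ioo_zero_one_diagonal_mul_pow (ha : a < 0) (hα : -1 < α)
    (hβ : -1 < β) (hγ : -1 < γ) {n k : ℕ} (hk : k < n) :
    ∫ x in Ioo (0 : ℝ) 1,
      (diagonal a α β γ n).eval x * ((x - a) ^ α * x ^ β * (1 - x) ^ γ) * x ^ k
      = 0 := by
  have h := integral_Ioo_zero_one_pow_mul_rodriguesDeriv ha (A := α + n) (B := β + n)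
    (G := γ + n) (by linarith) (by linarith) (by linarith) hk
  calc _ = (rodriguesConst α β γ n)⁻¹
        * ∫ x in Ioo (0 : ℝ) 1, x ^ k * rodriguesDeriv a (α + n) (β + n) (γ + n) 1 n x := by
        rw [← integral_const_mul]
        refine setIntegral_congr_fun measurableSet_Ioo fun x _ => ?_
        simp only [eval_diagonal, rodriguesDeriv, add_sub_cancel_right, one_mul]
        ring
    _ = 0 := by rw [h, mul_zero]

theorem iteratedDeriv_eq_rodriguesConst_mul_diagonal (ha : a < 0) (hα : -1 < α)
    (hβ : -1 < β) (hγ : -1 < γ) (n : ℕ) {x : ℝ} (hx : x ∈ Ioo (0 : ℝ) 1) :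
    iteratedDeriv n (fun y => (y - a) ^ (α + n) * y ^ (β + n) * (1 - y) ^ (γ + n)) x
      = rodriguesConst α β γ n * ((x - a) ^ α * x ^ β * (1 - x) ^ γ)
        * (diagonal a α β γ n).eval x := by
  have hchain := iteratedDeriv_eq_of_hasDerivAt isOpen_Ioo
    (f := rodriguesDeriv a (α + n) (β + n) (γ + n) 1)
    (fun m y hy => by
      simpa using hasDerivAt_rodriguesDeriv (s := 1) m (sub_ne_zero.2 (ha.trans hy.1).ne')
        (by simpa using hy.1.ne') (sub_ne_zero.2 hy.2.ne'))
    n x hx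
  have hbase : rodriguesDeriv a (α + n) (β + n) (γ + n) 1 0
      = fun y => (y - a) ^ (α + n) * y ^ (β + n) * (1 - y) ^ (γ + n) := by
    ext y
    simp [rodriguesDeriv, rodriguesPoly]
  have hc := rodriguesConst_ne_zero hα hβ hγ n
  rw [← hbase, hchain, eval_diagonal]
  simp only [rodriguesDeriv, add_sub_cancel_right, one_mul]
  field_simp

end JacobiAngelesco

/-- **Rodrigues formula for the diagonal Jacobi-Angelesco polynomial** `P_{n,n}`:
there is a monic polynomial `P` of degree `2n`, orthogonal to `x^k` (`k < n`) with
respect to `(x-a)^α |x|^β (1-x)^γ` on `(a,0)` and on `(0,1)`, such that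
`D^n [(x-a)^{α+n} x^{β+n} (1-x)^{γ+n}]
  = (-1)^n (α+β+γ+2n+1)_n (x-a)^α x^β (1-x)^γ P(x)` on `(0,1)`. -/
theorem stmt_13 (a : ℝ) (ha : a < 0) (α β γ : ℝ)
    (hα : -1 < α) (hβ : -1 < β) (hγ : -1 < γ) (n : ℕ) :
    ∃ P : Polynomial ℝ, P.Monic ∧ P.natDegree = 2 * n ∧
      (∀ k < n,
        ∫ x in Set.Ioo a 0,
          P.eval x * ((x - a) ^ α * |x| ^ β * (1 - x) ^ γ) * x ^ k = 0) ∧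
      (∀ k < n,
        ∫ x in Set.Ioo (0:ℝ) 1,
          P.eval x * ((x - a) ^ α * x ^ β * (1 - x) ^ γ) * x ^ k = 0) ∧
      ∀ x ∈ Set.Ioo (0:ℝ) 1,
        iteratedDeriv n (fun y => (y - a) ^ (α + n) * y ^ (β + n) * (1 - y) ^ (γ + n)) x
          = (-1) ^ n * (∏ i ∈ Finset.range n, (α + β + γ + 2 * n + 1 + i))
              * ((x - a) ^ α * x ^ β * (1 - x) ^ γ) * P.eval x :=
  ⟨JacobiAngelesco.diagonal a α β γ n,
    JacobiAngelesco.monic_diagonal hα hβ hγ n,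
    JacobiAngelesco.natDegree_diagonal hα hβ hγ n,
    fun _ hk => JacobiAngelesco.integral_Ioo_neg_diagonal_mul_pow ha hα hβ hγ hk,
    fun _ hk => JacobiAngelesco.integral_Ioo_zero_one_diagonal_mul_pow ha hα hβ hγ hk,
    fun _ hx => JacobiAngelesco.iteratedDeriv_eq_rodriguesConst_mul_diagonal ha hα hβ hγ n hx⟩
end
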